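/- arXiv:1306.0730 — 8 statements merged into one kernel-verified Lean document; each statement's English description precedes it below -/
import Mathlib

section
/- Let X be a real vector space and let S ⊆ X be an invex set with respect to a map η : S × S → X that satisfies condition C. Then for every x, y ∈ S and every t₁, t₂ ∈ [0,1], one has η(y + t₂η(x,y), y + t₁η(x,y)) = (t₂ − t₁)η(x,y). -/
/-!
Put `v = η x y` and `w = y + t₂ • v`. Condition C gives `η y w = (-t₂) • v` and
`η x w = (1 - t₂) • v`, so from `w` both `y` and `x` are seen along the line `w + ℝ • v`.
The target `y + t₁ • v = w + (t₁ - t₂) • v` lies on the segment from `w` towards `y` when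
`t₁ ≤ t₂`, and towards `x` otherwise; the first half of condition C, based at `w`, then
evaluates `η` there.
-/

theorem eta_add_smul_of_eq_smul {X : Type*} [AddCommGroup X] [Module ℝ X]
    {S : Set X} {η : X → X → X}
    (hC1 : ∀ x ∈ S, ∀ y ∈ S, ∀ t ∈ Set.Icc (0:ℝ) 1, η y (y + t • η x y) = (-t) • η x y)
    {z w v : X} (hz : z ∈ S) (hw : w ∈ S) {a d : ℝ} (hzw : η z w = a • v)
    (hd : d ∈ Set.uIcc 0 a) :
    η w (w + d • v) = (-d) • v := by
  rw [← segment_eq_uIcc, segment_eq_image] at hd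
  obtain ⟨s, hs, rfl⟩ := hd
  simpa only [hzw, smul_smul, smul_eq_mul, mul_zero, zero_add, neg_mul]
    using hC1 z hz w hw s hs

/-- If `S` is an invex subset of a real vector space `X` with respect to
`η`, and `η` satisfies condition C, then for all `x, y ∈ S` and `t₁, t₂ ∈ [0,1]` we have
`η (y + t₂ • η x y) (y + t₁ • η x y) = (t₂ - t₁) • η x y`. -/
theorem condition_C_segment {X : Type*} [AddCommGroup X] [Module ℝ X]
    (S : Set X) (η : X → X → X)
    (hinvex : ∀ x ∈ S, ∀ y ∈ S, ∀ t ∈ Set.Icc (0:ℝ) 1, y + t • η x y ∈ S)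
    (hC1 : ∀ x ∈ S, ∀ y ∈ S, ∀ t ∈ Set.Icc (0:ℝ) 1,
      η y (y + t • η x y) = (-t) • η x y)
    (hC2 : ∀ x ∈ S, ∀ y ∈ S, ∀ t ∈ Set.Icc (0:ℝ) 1,
      η x (y + t • η x y) = (1 - t) • η x y) :
    ∀ x ∈ S, ∀ y ∈ S, ∀ t₁ ∈ Set.Icc (0:ℝ) 1, ∀ t₂ ∈ Set.Icc (0:ℝ) 1,
      η (y + t₂ • η x y) (y + t₁ • η x y) = (t₂ - t₁) • η x y := by
  intro x hx y hy t₁ ht₁ t₂ ht₂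
  have hw := hinvex x hx y hy t₂ ht₂
  have hpt : y + t₁ • η x y = (y + t₂ • η x y) + (t₁ - t₂) • η x y := by
    rw [sub_smul]; abel
  rw [hpt, ← neg_sub t₁ t₂]
  rcases le_total t₁ t₂ with hle | hle
  · exact eta_add_smul_of_eq_smul hC1 hy hw (hC1 x hx y hy t₂ ht₂)
      (Set.mem_uIcc.2 (Or.inr ⟨by linarith [ht₁.1], by linarith⟩))
  · exact eta_add_smul_of_eq_smul hC1 hx hw (hC2 x hx y hy t₂ ht₂)
      (Set.mem_uIcc.2 (Or.inl ⟨by linarith, by linarith [ht₁.2]⟩))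
end

section
/- Let S ⊆ B(H)_sa be an invex set with respect to η : S × S → B(H)_sa satisfying condition C, let f : ℝ → ℝ be continuous, let A, B ∈ S and V := A + η(B,A). If f is operator preinvex with respect to η on the η-path P_AV, then for every x ∈ H with ‖x‖ = 1 the function φ_{x,A,B} : [0,1] → ℝ defined by φ_{x,A,B}(t) := ⟨f(A + tη(B,A))x, x⟩ is convex on [0,1]. -/
/-!
By condition C, `η` between two points `A + t₂ • η B A` and `A + t₁ • η B A` of the η-path is
`(t₂ - t₁) • η B A`, so preinvexity along the path is ordinary convexity of
`t ↦ f (A + t • η B A)` for the Loewner order. The form `T ↦ re ⟪T x, x⟫` is `ℝ`-linear and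
monotone for that order, so it carries this operator convexity to convexity of `φ`.
-/

open scoped InnerProductSpace
open Set

def IsPreinvexOn {E β : Type*} [Add E] [SMul ℝ E] [Add β] [SMul ℝ β] [LE β]
    (η : E → E → E) (P : Set E) (g : E → β) : Prop :=
  ∀ C₁ ∈ P, ∀ C₂ ∈ P, ∀ lam ∈ Icc (0 : ℝ) 1,
    g (C₁ + lam • η C₂ C₁) ≤ (1 - lam) • g C₁ + lam • g C₂

theorem ConvexOn.comp_linearMap_of_monotone {𝕜 E β γ : Type*} [Semiring 𝕜] [PartialOrder 𝕜]
    [AddCommMonoid E] [SMul 𝕜 E] [AddCommMonoid β] [PartialOrder β] [Module 𝕜 β]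
    [AddCommMonoid γ] [PartialOrder γ] [Module 𝕜 γ] {s : Set E} {f : E → β}
    (hf : ConvexOn 𝕜 s f) (g : β →ₗ[𝕜] γ) (hg : Monotone g) : ConvexOn 𝕜 s (g ∘ f) :=
  ⟨hf.1, fun x hx y hy a b ha hb hab => by
    simpa only [Function.comp_apply, map_add, map_smul] using hg (hf.2 hx hy ha hb hab)⟩

section EtaPath

variable {E : Type*} [AddCommGroup E] [Module ℝ E] {S : Set E} {η : E → E → E} {A B : E}

theorem eta_path_eq_smul
    (hC : ∀ A ∈ S, ∀ B ∈ S, ∀ t ∈ Icc (0 : ℝ) 1, η A (A + t • η B A) = (-t) • η B A)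
    (hA : A ∈ S) (hB : B ∈ S) {t₁ t₂ : ℝ} (ht₁ : 0 ≤ t₁) (ht : t₁ < t₂) (ht₂ : t₂ ≤ 1)
    (hmem : A + t₂ • η B A ∈ S) :
    η (A + t₂ • η B A) (A + t₁ • η B A) = (t₂ - t₁) • η B A := by
  have ht₂pos : 0 < t₂ := ht₁.trans_lt ht
  set r := (t₂ - t₁) / t₂
  have hr : r ∈ Icc (0 : ℝ) 1 :=
    ⟨div_nonneg (by linarith) ht₂pos.le, (div_le_one ht₂pos).mpr (by linarith)⟩
  have hrt : r * t₂ = t₂ - t₁ := div_mul_cancel₀ _ ht₂pos.ne'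
  have hback : η A (A + t₂ • η B A) = (-t₂) • η B A := hC A hA B hB t₂ ⟨ht₂pos.le, ht₂⟩
  -- condition C from `A + t₂ • η B A` back towards `A`, at parameter `r`, reaches `A + t₁ • η B A`
  have hstep := hC _ hmem A hA r hr
  rw [hback, smul_smul, smul_smul, neg_mul_neg, hrt, mul_neg, hrt] at hstep
  rwa [show A + t₂ • η B A + (-(t₂ - t₁)) • η B A = A + t₁ • η B A by module] at hstep

theorem convexOn_of_isPreinvexOn_eta_path {β : Type*} [AddCommMonoid β] [PartialOrder β]
    [Module ℝ β] {g : E → β}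
    (hinvex : ∀ t ∈ Icc (0 : ℝ) 1, A + t • η B A ∈ S)
    (hC : ∀ A ∈ S, ∀ B ∈ S, ∀ t ∈ Icc (0 : ℝ) 1, η A (A + t • η B A) = (-t) • η B A)
    (hA : A ∈ S) (hB : B ∈ S)
    (hg : IsPreinvexOn η {C | ∃ t ∈ Icc (0 : ℝ) 1, C = A + t • η B A} g) :
    ConvexOn ℝ (Icc 0 1) fun t : ℝ => g (A + t • η B A) := by
  refine LinearOrder.convexOn_of_lt (convex_Icc 0 1) ?_
  rintro t₁ ht₁ t₂ ht₂ ht a b ha hb hab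
  have hpath := eta_path_eq_smul hC hA hB ht₁.1 ht ht₂.2 (hinvex t₂ ht₂)
  have h := hg _ ⟨t₁, ht₁, rfl⟩ _ ⟨t₂, ht₂, rfl⟩ b ⟨hb.le, by linarith⟩
  rw [hpath, show 1 - b = a by linarith] at h
  convert h using 2
  rw [smul_smul, smul_eq_mul, smul_eq_mul, show a = 1 - b by linarith]
  module

end EtaPath

namespace ContinuousLinearMap

variable {E : Type*} [NormedAddCommGroup E] [InnerProductSpace ℂ E]

noncomputable def reApplyInnerSelfₗ (x : E) : (E →L[ℂ] E) →ₗ[ℝ] ℝ where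
  toFun T := T.reApplyInnerSelf x
  map_add' T U := by simp [reApplyInnerSelf_apply, inner_add_left]
  map_smul' r T := by
    rw [RingHom.id_apply, smul_eq_mul, reApplyInnerSelf_apply, reApplyInnerSelf_apply, smul_apply,
      RCLike.real_smul_eq_coe_smul (K := ℂ), inner_smul_real_left, RCLike.smul_re]

theorem monotone_reApplyInnerSelfₗ (x : E) : Monotone (reApplyInnerSelfₗ x) := by
  intro T U hTU
  have h := ((le_def T U).mp hTU).re_inner_nonneg_left x
  rwa [sub_apply, inner_sub_left, map_sub, sub_nonneg] at h

end ContinuousLinearMap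

theorem operator_preinvex_implies_phi_convex_general
    {H : Type*} [NormedAddCommGroup H] [InnerProductSpace ℂ H] [CompleteSpace H]
    (S : Set (H →L[ℂ] H))
    (η : (H →L[ℂ] H) → (H →L[ℂ] H) → (H →L[ℂ] H))
    (hinvex : ∀ A ∈ S, ∀ B ∈ S, ∀ t ∈ Set.Icc (0:ℝ) 1, A + t • η B A ∈ S)
    (hC1 : ∀ A ∈ S, ∀ B ∈ S, ∀ t ∈ Set.Icc (0:ℝ) 1,
      η A (A + t • η B A) = (-t) • η B A)
    (f : ℝ → ℝ)
    (A : H →L[ℂ] H) (hA : A ∈ S) (B : H →L[ℂ] H) (hB : B ∈ S)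
    -- f is operator preinvex with respect to η on the η-path P_AV,
    -- where P_AV = {A + t • η B A : t ∈ [0,1]} and V = A + η B A :
    (hpreinvex : ∀ C₁ ∈ {C | ∃ t ∈ Set.Icc (0:ℝ) 1, C = A + t • η B A},
      ∀ C₂ ∈ {C | ∃ t ∈ Set.Icc (0:ℝ) 1, C = A + t • η B A},
      ∀ lam ∈ Set.Icc (0:ℝ) 1,
        cfc f (C₁ + lam • η C₂ C₁) ≤ (1 - lam) • cfc f C₁ + lam • cfc f C₂) :
    ∀ x : H, ‖x‖ = 1 →
      ConvexOn ℝ (Set.Icc (0:ℝ) 1)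
        (fun t : ℝ => RCLike.re ⟪(cfc f (A + t • η B A)) x, x⟫_ℂ) := by
  intro x _
  have hoperator : ConvexOn ℝ (Icc 0 1) fun t : ℝ => cfc f (A + t • η B A) :=
    convexOn_of_isPreinvexOn_eta_path (hinvex A hA B hB) hC1 hA hB hpreinvex
  exact hoperator.comp_linearMap_of_monotone _
    (ContinuousLinearMap.monotone_reApplyInnerSelfₗ x)

/-- If `f` is operator preinvex with respect to `η` on the η-path `P_AV`,
then for every unit vector `x` the function `t ↦ ⟨f(A + tη(B,A))x, x⟩` is convex on `[0,1]`. -/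
theorem operator_preinvex_implies_phi_convex
    {H : Type*} [NormedAddCommGroup H] [InnerProductSpace ℂ H] [CompleteSpace H]
    (S : Set (H →L[ℂ] H)) (hSsa : ∀ A ∈ S, IsSelfAdjoint A)
    (η : (H →L[ℂ] H) → (H →L[ℂ] H) → (H →L[ℂ] H))
    (hinvex : ∀ A ∈ S, ∀ B ∈ S, ∀ t ∈ Set.Icc (0:ℝ) 1, A + t • η B A ∈ S)
    (hC1 : ∀ A ∈ S, ∀ B ∈ S, ∀ t ∈ Set.Icc (0:ℝ) 1,
      η A (A + t • η B A) = (-t) • η B A)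
    (hC2 : ∀ A ∈ S, ∀ B ∈ S, ∀ t ∈ Set.Icc (0:ℝ) 1,
      η B (A + t • η B A) = (1 - t) • η B A)
    (f : ℝ → ℝ) (hf : Continuous f)
    (A : H →L[ℂ] H) (hA : A ∈ S) (B : H →L[ℂ] H) (hB : B ∈ S)
    -- f is operator preinvex with respect to η on the η-path P_AV,
    -- where P_AV = {A + t • η B A : t ∈ [0,1]} and V = A + η B A :
    (hpreinvex : ∀ C₁ ∈ {C | ∃ t ∈ Set.Icc (0:ℝ) 1, C = A + t • η B A},
      ∀ C₂ ∈ {C | ∃ t ∈ Set.Icc (0:ℝ) 1, C = A + t • η B A},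
      ∀ lam ∈ Set.Icc (0:ℝ) 1,
        cfc f (C₁ + lam • η C₂ C₁) ≤ (1 - lam) • cfc f C₁ + lam • cfc f C₂) :
    ∀ x : H, ‖x‖ = 1 →
      ConvexOn ℝ (Set.Icc (0:ℝ) 1)
        (fun t : ℝ => RCLike.re ⟪(cfc f (A + t • η B A)) x, x⟫_ℂ) :=
  operator_preinvex_implies_phi_convex_general S η hinvex hC1 f A hA B hB hpreinvex
end

section
/- Let S ⊆ B(H)_sa be an invex set with respect to η : S × S → B(H)_sa satisfying condition C, let f : ℝ → ℝ be continuous, let A, B ∈ S and V := A + η(B,A). If for every x ∈ H with ‖x‖ = 1 the function φ_{x,A,B} : [0,1] → ℝ defined by φ_{x,A,B}(t) := ⟨f(A + tη(B,A))x, x⟩ is convex on [0,1], then f is operator preinvex with respect to η on the η-path P_AV. -/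
/-!
Condition C forces `η` to act affinely along the η-path:
`η (A + t₂ • η B A) (A + t₁ • η B A) = (t₂ - t₁) • η B A`. Hence the preinvex combination
`C₁ + λ • η C₂ C₁` of two points `A + tᵢ • η B A` of the path is the path point at parameter
`(1 - λ) t₁ + λ t₂`, and the operator inequality becomes, vector by vector, the convexity of
`φ_{x,A,B}`; unit vectors suffice because `⟪T x, x⟫` is homogeneous of degree two in `x`.
-/

open scoped InnerProductSpace

namespace ContinuousLinearMap

variable {𝕜 E : Type*} [RCLike 𝕜] [NormedAddCommGroup E] [InnerProductSpace 𝕜 E] [CompleteSpace E]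

theorem le_of_forall_norm_eq_one_re_inner_le {T U : E →L[𝕜] E}
    (hT : IsSelfAdjoint T) (hU : IsSelfAdjoint U)
    (h : ∀ x : E, ‖x‖ = 1 → RCLike.re ⟪T x, x⟫_𝕜 ≤ RCLike.re ⟪U x, x⟫_𝕜) : T ≤ U := by
  rw [le_def, isPositive_def']
  refine ⟨hU.sub hT, fun x => ?_⟩
  obtain rfl | hx := eq_or_ne x 0
  · simp [reApplyInnerSelf_apply]
  have hx_eq : x = (‖x‖ : 𝕜) • (‖x‖⁻¹ : 𝕜) • x :=
    (smul_inv_smul₀ (RCLike.ofReal_ne_zero.mpr (norm_ne_zero_iff.mpr hx)) x).symm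
  rw [hx_eq, reApplyInnerSelf_smul, reApplyInnerSelf_apply, sub_apply, inner_sub_left, map_sub]
  exact mul_nonneg (sq_nonneg _) (sub_nonneg.mpr (h _ (norm_smul_inv_norm hx)))

theorem re_inner_real_smul_apply {H : Type*} [NormedAddCommGroup H] [InnerProductSpace ℂ H]
    (r : ℝ) (T : H →L[ℂ] H) (x y : H) :
    RCLike.re ⟪(r • T) x, y⟫_ℂ = r * RCLike.re ⟪T x, y⟫_ℂ := by
  rw [smul_apply, RCLike.real_smul_eq_coe_smul (K := ℂ), inner_smul_real_left, RCLike.smul_re]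

end ContinuousLinearMap

section EtaPath

variable {E : Type*} [AddCommGroup E] [Module ℝ E] {S : Set E} {η : E → E → E} {A B : E}

/- With `s := (t₂ - t₁) / t₂`, condition C at the base point `A + t₂ • η B A` towards `A` moves
back to `A + t₁ • η B A`; for `t₂ = 0` the junk value `s = 0` still works. -/
theorem eta_path_eq_of_le
    (hinvex : ∀ A ∈ S, ∀ B ∈ S, ∀ t ∈ Set.Icc (0:ℝ) 1, A + t • η B A ∈ S)
    (hC1 : ∀ A ∈ S, ∀ B ∈ S, ∀ t ∈ Set.Icc (0:ℝ) 1, η A (A + t • η B A) = (-t) • η B A)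
    (hA : A ∈ S) (hB : B ∈ S) {t₁ t₂ : ℝ} (ht₁ : 0 ≤ t₁) (h₁₂ : t₁ ≤ t₂) (ht₂ : t₂ ≤ 1) :
    η (A + t₂ • η B A) (A + t₁ • η B A) = (t₂ - t₁) • η B A := by
  set s := (t₂ - t₁) / t₂
  have hs : s ∈ Set.Icc (0:ℝ) 1 :=
    ⟨div_nonneg (sub_nonneg.mpr h₁₂) (ht₁.trans h₁₂),
      div_le_one_of_le₀ (by linarith) (by linarith)⟩
  have hst : s * t₂ = t₂ - t₁ := div_mul_cancel_of_imp fun h => by linarith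
  have hC := hC1 _ (hinvex A hA B hB t₂ ⟨ht₁.trans h₁₂, ht₂⟩) A hA s hs
  rw [hC1 A hA B hB t₂ ⟨ht₁.trans h₁₂, ht₂⟩] at hC
  have hpath : A + t₂ • η B A + s • (-t₂) • η B A = A + t₁ • η B A := by
    rw [smul_smul, mul_neg, hst]; module
  rwa [hpath, smul_smul, neg_mul_neg, hst] at hC

/- Symmetrically, with `s := (t₁ - t₂) / (1 - t₂)`, condition C at `A + t₂ • η B A` towards `B`. -/
theorem eta_path_eq_of_ge
    (hinvex : ∀ A ∈ S, ∀ B ∈ S, ∀ t ∈ Set.Icc (0:ℝ) 1, A + t • η B A ∈ S)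
    (hC1 : ∀ A ∈ S, ∀ B ∈ S, ∀ t ∈ Set.Icc (0:ℝ) 1, η A (A + t • η B A) = (-t) • η B A)
    (hC2 : ∀ A ∈ S, ∀ B ∈ S, ∀ t ∈ Set.Icc (0:ℝ) 1, η B (A + t • η B A) = (1 - t) • η B A)
    (hA : A ∈ S) (hB : B ∈ S) {t₁ t₂ : ℝ} (ht₂ : 0 ≤ t₂) (h₂₁ : t₂ ≤ t₁) (ht₁ : t₁ ≤ 1) :
    η (A + t₂ • η B A) (A + t₁ • η B A) = (t₂ - t₁) • η B A := by
  set s := (t₁ - t₂) / (1 - t₂)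
  have hs : s ∈ Set.Icc (0:ℝ) 1 :=
    ⟨div_nonneg (sub_nonneg.mpr h₂₁) (by linarith),
      div_le_one_of_le₀ (by linarith) (by linarith)⟩
  have hst : s * (1 - t₂) = t₁ - t₂ := div_mul_cancel_of_imp fun h => by linarith
  have hC := hC1 _ (hinvex A hA B hB t₂ ⟨ht₂, h₂₁.trans ht₁⟩) B hB s hs
  rw [hC2 A hA B hB t₂ ⟨ht₂, h₂₁.trans ht₁⟩] at hC
  have hpath : A + t₂ • η B A + s • (1 - t₂) • η B A = A + t₁ • η B A := by
    rw [smul_smul, hst]; module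
  rwa [hpath, smul_smul, neg_mul, hst, neg_sub] at hC

theorem eta_path_eq
    (hinvex : ∀ A ∈ S, ∀ B ∈ S, ∀ t ∈ Set.Icc (0:ℝ) 1, A + t • η B A ∈ S)
    (hC1 : ∀ A ∈ S, ∀ B ∈ S, ∀ t ∈ Set.Icc (0:ℝ) 1, η A (A + t • η B A) = (-t) • η B A)
    (hC2 : ∀ A ∈ S, ∀ B ∈ S, ∀ t ∈ Set.Icc (0:ℝ) 1, η B (A + t • η B A) = (1 - t) • η B A)
    (hA : A ∈ S) (hB : B ∈ S) {t₁ t₂ : ℝ} (ht₁ : t₁ ∈ Set.Icc (0:ℝ) 1)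
    (ht₂ : t₂ ∈ Set.Icc (0:ℝ) 1) :
    η (A + t₂ • η B A) (A + t₁ • η B A) = (t₂ - t₁) • η B A := by
  obtain h₁₂ | h₂₁ := le_total t₁ t₂
  · exact eta_path_eq_of_le hinvex hC1 hA hB ht₁.1 h₁₂ ht₂.2
  · exact eta_path_eq_of_ge hinvex hC1 hC2 hA hB ht₂.1 h₂₁ ht₁.2

end EtaPath

theorem phi_convex_implies_operator_preinvex_general
    {H : Type*} [NormedAddCommGroup H] [InnerProductSpace ℂ H] [CompleteSpace H]
    (S : Set (H →L[ℂ] H))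
    (η : (H →L[ℂ] H) → (H →L[ℂ] H) → (H →L[ℂ] H))
    (hinvex : ∀ A ∈ S, ∀ B ∈ S, ∀ t ∈ Set.Icc (0:ℝ) 1, A + t • η B A ∈ S)
    (hC1 : ∀ A ∈ S, ∀ B ∈ S, ∀ t ∈ Set.Icc (0:ℝ) 1,
      η A (A + t • η B A) = (-t) • η B A)
    (hC2 : ∀ A ∈ S, ∀ B ∈ S, ∀ t ∈ Set.Icc (0:ℝ) 1,
      η B (A + t • η B A) = (1 - t) • η B A)
    (f : ℝ → ℝ)
    (A : H →L[ℂ] H) (hA : A ∈ S) (B : H →L[ℂ] H) (hB : B ∈ S)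
    (hconv : ∀ x : H, ‖x‖ = 1 →
      ConvexOn ℝ (Set.Icc (0:ℝ) 1)
        (fun t : ℝ => RCLike.re ⟪(cfc f (A + t • η B A)) x, x⟫_ℂ)) :
    -- f is operator preinvex with respect to η on the η-path P_AV,
    -- where P_AV = {A + t • η B A : t ∈ [0,1]} and V = A + η B A :
    ∀ C₁ ∈ {C | ∃ t ∈ Set.Icc (0:ℝ) 1, C = A + t • η B A},
      ∀ C₂ ∈ {C | ∃ t ∈ Set.Icc (0:ℝ) 1, C = A + t • η B A},
      ∀ lam ∈ Set.Icc (0:ℝ) 1,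
        cfc f (C₁ + lam • η C₂ C₁) ≤ (1 - lam) • cfc f C₁ + lam • cfc f C₂ := by
  rintro _ ⟨t₁, ht₁, rfl⟩ _ ⟨t₂, ht₂, rfl⟩ lam ⟨hlam₀, hlam₁⟩
  have hcomb : A + t₁ • η B A + lam • η (A + t₂ • η B A) (A + t₁ • η B A)
      = A + ((1 - lam) • t₁ + lam • t₂) • η B A := by
    rw [eta_path_eq hinvex hC1 hC2 hA hB ht₁ ht₂]; module
  rw [hcomb]
  refine ContinuousLinearMap.le_of_forall_norm_eq_one_re_inner_le (cfc_predicate f _)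
    (((IsSelfAdjoint.all _).smul (cfc_predicate f _)).add
      ((IsSelfAdjoint.all _).smul (cfc_predicate f _))) fun x hx => ?_
  have hφ := (hconv x hx).2 ht₁ ht₂ (sub_nonneg.mpr hlam₁) hlam₀ (sub_add_cancel 1 lam)
  rw [add_apply, inner_add_left, map_add, ContinuousLinearMap.re_inner_real_smul_apply,
    ContinuousLinearMap.re_inner_real_smul_apply]
  exact hφ

/-- If for every unit vector `x` the function `t ↦ ⟨f(A + tη(B,A))x, x⟩`
is convex on `[0,1]`, then `f` is operator preinvex with respect to `η` on the η-path `P_AV`. -/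
theorem phi_convex_implies_operator_preinvex
    {H : Type*} [NormedAddCommGroup H] [InnerProductSpace ℂ H] [CompleteSpace H]
    (S : Set (H →L[ℂ] H)) (hSsa : ∀ A ∈ S, IsSelfAdjoint A)
    (η : (H →L[ℂ] H) → (H →L[ℂ] H) → (H →L[ℂ] H))
    (hinvex : ∀ A ∈ S, ∀ B ∈ S, ∀ t ∈ Set.Icc (0:ℝ) 1, A + t • η B A ∈ S)
    (hC1 : ∀ A ∈ S, ∀ B ∈ S, ∀ t ∈ Set.Icc (0:ℝ) 1,
      η A (A + t • η B A) = (-t) • η B A)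
    (hC2 : ∀ A ∈ S, ∀ B ∈ S, ∀ t ∈ Set.Icc (0:ℝ) 1,
      η B (A + t • η B A) = (1 - t) • η B A)
    (f : ℝ → ℝ) (hf : Continuous f)
    (A : H →L[ℂ] H) (hA : A ∈ S) (B : H →L[ℂ] H) (hB : B ∈ S)
    (hconv : ∀ x : H, ‖x‖ = 1 →
      ConvexOn ℝ (Set.Icc (0:ℝ) 1)
        (fun t : ℝ => RCLike.re ⟪(cfc f (A + t • η B A)) x, x⟫_ℂ)) :
    -- f is operator preinvex with respect to η on the η-path P_AV,
    -- where P_AV = {A + t • η B A : t ∈ [0,1]} and V = A + η B A :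
    ∀ C₁ ∈ {C | ∃ t ∈ Set.Icc (0:ℝ) 1, C = A + t • η B A},
      ∀ C₂ ∈ {C | ∃ t ∈ Set.Icc (0:ℝ) 1, C = A + t • η B A},
      ∀ lam ∈ Set.Icc (0:ℝ) 1,
        cfc f (C₁ + lam • η C₂ C₁) ≤ (1 - lam) • cfc f C₁ + lam • cfc f C₂ :=
  phi_convex_implies_operator_preinvex_general S η hinvex hC1 hC2 f A hA B hB hconv
end

section
/- Let S ⊆ B(H)_sa be an invex set with respect to η : S × S → B(H)_sa satisfying condition C, and let f : ℝ → ℝ be continuous and operator preinvex with respect to η on S. Then for every A, B ∈ S, with V := A + η(B,A), the following chain of inequalities holds in the operator order: f((A + V)/2) ≤ (1/2)[f((3A + V)/4) + f((A + 3V)/4)] ≤ ∫₀¹ f(A + tη(B,A)) dt ≤ (1/2)[f((A + V)/2) + (f(A) + f(V))/2] ≤ (f(A) + f(B))/2. -/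
/-!
Under condition C the map `η` is affine along every invex segment:
`η(A + tη(B,A), A + sη(B,A)) = (t - s)η(B,A)`.
Hence preinvexity of `f` on `S` makes `g(t) = f(A + tη(B,A))` a convex function
`[0,1] → B(H)_sa`, and the chain is the Hermite–Hadamard inequality for `g`, applied separately
on `[0,1/2]` and `[1/2,1]`.
Hermite–Hadamard holds verbatim for convex functions with values in any ordered Banach space
whose positive cone is closed, since the Bochner integral is then monotone.
-/

open Set MeasureTheory

section Invexity

variable {E β : Type*} [AddCommGroup E] [Module ℝ E]

def Invex (S : Set E) (η : E → E → E) : Prop :=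
  ∀ A ∈ S, ∀ B ∈ S, ∀ t ∈ Icc (0 : ℝ) 1, A + t • η B A ∈ S

structure ConditionC (S : Set E) (η : E → E → E) : Prop where
  eta_base : ∀ A ∈ S, ∀ B ∈ S, ∀ t ∈ Icc (0 : ℝ) 1, η A (A + t • η B A) = (-t) • η B A
  eta_target : ∀ A ∈ S, ∀ B ∈ S, ∀ t ∈ Icc (0 : ℝ) 1, η B (A + t • η B A) = (1 - t) • η B A

def PreinvexOn [AddCommMonoid β] [PartialOrder β] [SMul ℝ β]
    (S : Set E) (η : E → E → E) (F : E → β) : Prop :=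
  ∀ A ∈ S, ∀ B ∈ S, ∀ t ∈ Icc (0 : ℝ) 1, F (A + t • η B A) ≤ (1 - t) • F A + t • F B

variable {S : Set E} {η : E → E → E} {A B : E}

theorem ConditionC.eta_self (hη : ConditionC S η) (hA : A ∈ S) : η A A = 0 := by
  simpa using hη.eta_base A hA A hA 0 ⟨le_rfl, zero_le_one⟩

theorem ConditionC.eta_segment (hS : Invex S η) (hη : ConditionC S η) (hA : A ∈ S) (hB : B ∈ S)
    {s t : ℝ} (hs : s ∈ Icc (0 : ℝ) 1) (ht : t ∈ Icc (0 : ℝ) 1) :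
    η (A + t • η B A) (A + s • η B A) = (t - s) • η B A := by
  have hX := hS A hA B hB t ht
  -- `A + sη(B,A)` lies on the η-segment from `A + tη(B,A)` towards `A` (if `s < t`) or towards
  -- `B` (if `t < s`), at parameter `(t - s)/t` resp. `(s - t)/(1 - t)`.
  rcases lt_trichotomy s t with hst | rfl | hts
  · have ht₀ : 0 < t := hs.1.trans_lt hst
    have key := hη.eta_base _ hX A hA ((t - s) / t)
      ⟨div_nonneg (by linarith) ht₀.le, (div_le_one ht₀).2 (by linarith [hs.1])⟩
    rw [hη.eta_base A hA B hB t ht] at key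
    have hpt : A + t • η B A + ((t - s) / t) • (-t) • η B A = A + s • η B A := by
      match_scalars <;> field_simp; ring
    rw [hpt] at key
    rw [key]
    match_scalars
    field_simp
  · simp [hη.eta_self hX]
  · have ht₁ : 0 < 1 - t := by linarith [hs.2]
    have key := hη.eta_base _ hX B hB ((s - t) / (1 - t))
      ⟨div_nonneg (by linarith) ht₁.le, (div_le_one ht₁).2 (by linarith [hs.2])⟩
    rw [hη.eta_target A hA B hB t ht] at key
    have hpt : A + t • η B A + ((s - t) / (1 - t)) • (1 - t) • η B A = A + s • η B A := by
      match_scalars <;> field_simp; ring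
    rw [hpt] at key
    rw [key]
    match_scalars
    field_simp
    ring

theorem PreinvexOn.convexOn_segment [AddCommMonoid β] [PartialOrder β] [Module ℝ β] {F : E → β}
    (hS : Invex S η) (hη : ConditionC S η) (hF : PreinvexOn S η F) (hA : A ∈ S) (hB : B ∈ S) :
    ConvexOn ℝ (Icc 0 1) fun t : ℝ => F (A + t • η B A) := by
  refine ⟨convex_Icc 0 1, fun s hs t ht a b _ hb hab => ?_⟩
  have key := hF _ (hS A hA B hB s hs) _ (hS A hA B hB t ht) b ⟨hb, by linarith⟩
  rw [hη.eta_segment hS hA hB hs ht, ← hab, add_sub_cancel_right] at key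
  convert key using 2
  rw [add_assoc, smul_smul, ← add_smul]
  congr 2
  simp only [smul_eq_mul]
  linear_combination s * hab

theorem PreinvexOn.midpoint_trapezoid_le [AddCommMonoid β] [PartialOrder β] [Module ℝ β]
    [IsOrderedAddMonoid β] [IsOrderedModule ℝ β] {F : E → β} (hF : PreinvexOn S η F)
    (hA : A ∈ S) (hB : B ∈ S) :
    (2⁻¹ : ℝ) • (F (A + (2⁻¹ : ℝ) • η B A) + (2⁻¹ : ℝ) • (F A + F (A + η B A))) ≤
      (2⁻¹ : ℝ) • (F A + F B) := by
  have hmid := hF A hA B hB 2⁻¹ ⟨by norm_num, by norm_num⟩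
  have hend : F (A + η B A) ≤ F B := by simpa using hF A hA B hB 1 ⟨zero_le_one, le_rfl⟩
  calc (2⁻¹ : ℝ) • (F (A + (2⁻¹ : ℝ) • η B A) + (2⁻¹ : ℝ) • (F A + F (A + η B A)))
      ≤ (2⁻¹ : ℝ) • ((1 - 2⁻¹ : ℝ) • F A + (2⁻¹ : ℝ) • F B + (2⁻¹ : ℝ) • (F A + F B)) := by
        gcongr
    _ = (2⁻¹ : ℝ) • (F A + F B) := by module

end Invexity

section HermiteHadamard

variable {E : Type*} [NormedAddCommGroup E] [NormedSpace ℝ E] [PartialOrder E]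
  [IsOrderedAddMonoid E] [IsOrderedModule ℝ E] [ClosedIciTopology E] {g : ℝ → E} {a b : ℝ}

theorem intervalIntegral.integral_mono_on_of_ordered {f : ℝ → E} (hab : a ≤ b)
    (hf : IntervalIntegrable f volume a b) (hg : IntervalIntegrable g volume a b)
    (h : ∀ x ∈ Icc a b, f x ≤ g x) : ∫ x in a..b, f x ≤ ∫ x in a..b, g x := by
  simp only [intervalIntegral.integral_of_le hab]
  exact setIntegral_mono_on hf.1 hg.1 measurableSet_Ioc fun x hx => h x (Ioc_subset_Icc_self hx)

variable [CompleteSpace E]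

theorem ConvexOn.smul_map_midpoint_le_integral (hab : a ≤ b) (hg : ConvexOn ℝ (Icc a b) g)
    (hcont : ContinuousOn g (Icc a b)) :
    (b - a) • g ((a + b) / 2) ≤ ∫ x in a..b, g x := by
  have hint : IntervalIntegrable g volume a b := hcont.intervalIntegrable_of_Icc hab
  have hrefl : ∫ x in a..b, g (a + b - x) = ∫ x in a..b, g x := by
    rw [intervalIntegral.integral_comp_sub_left]; simp
  have hint' : IntervalIntegrable (fun x => g (a + b - x)) volume a b := by
    simpa using (hint.comp_sub_left (a + b)).symm
  have hpt : ∀ x ∈ Icc a b, g ((a + b) / 2) ≤ (2⁻¹ : ℝ) • (g x + g (a + b - x)) := by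
    intro x hx
    have hx' : a + b - x ∈ Icc a b := ⟨by linarith [hx.2], by linarith [hx.1]⟩
    have := hg.2 hx hx' (by norm_num : (0 : ℝ) ≤ 2⁻¹) (by norm_num : (0 : ℝ) ≤ 2⁻¹) (by norm_num)
    rw [smul_add]
    convert this using 2
    simp only [smul_eq_mul]
    ring
  calc (b - a) • g ((a + b) / 2) = ∫ _ in a..b, g ((a + b) / 2) :=
      (intervalIntegral.integral_const _).symm
    _ ≤ ∫ x in a..b, (2⁻¹ : ℝ) • (g x + g (a + b - x)) :=
      intervalIntegral.integral_mono_on_of_ordered hab intervalIntegrable_const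
        ((hint.add hint').smul _) hpt
    _ = ∫ x in a..b, g x := by
      rw [intervalIntegral.integral_smul, intervalIntegral.integral_add hint hint', hrefl]
      module

theorem ConvexOn.integral_le_smul_add (hab : a ≤ b) (hg : ConvexOn ℝ (Icc a b) g)
    (hcont : ContinuousOn g (Icc a b)) :
    ∫ x in a..b, g x ≤ ((b - a) / 2) • (g a + g b) := by
  have hmem : ∀ t ∈ Icc (0 : ℝ) 1, (b - a) * t + a ∈ Icc a b := fun t ht =>
    ⟨by nlinarith [ht.1], by nlinarith [ht.2]⟩
  have hsub : ∫ x in a..b, g x = (b - a) • ∫ t in (0 : ℝ)..1, g ((b - a) * t + a) := by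
    rw [intervalIntegral.smul_integral_comp_mul_add]; simp
  have hint : IntervalIntegrable (fun t => g ((b - a) * t + a)) volume 0 1 :=
    (hcont.comp (by fun_prop) hmem).intervalIntegrable_of_Icc zero_le_one
  have hchord : ∀ t ∈ Icc (0 : ℝ) 1, g ((b - a) * t + a) ≤ (1 - t) • g a + t • g b := by
    intro t ht
    have := hg.2 (left_mem_Icc.2 hab) (right_mem_Icc.2 hab) (sub_nonneg.2 ht.2) ht.1
      (sub_add_cancel 1 t)
    convert this using 2
    simp only [smul_eq_mul]
    ring
  have hlin : ∫ t in (0 : ℝ)..1, ((1 - t) • g a + t • g b) = (2⁻¹ : ℝ) • (g a + g b) := by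
    rw [intervalIntegral.integral_add (Continuous.intervalIntegrable (by fun_prop) _ _)
      (Continuous.intervalIntegrable (by fun_prop) _ _), intervalIntegral.integral_smul_const,
      intervalIntegral.integral_smul_const]
    simp [intervalIntegral.integral_comp_sub_left (fun x : ℝ => x)]
  calc ∫ x in a..b, g x ≤ (b - a) • ∫ t in (0 : ℝ)..1, ((1 - t) • g a + t • g b) := by
        rw [hsub]
        exact smul_le_smul_of_nonneg_left
          (intervalIntegral.integral_mono_on_of_ordered zero_le_one hint
            (Continuous.intervalIntegrable (by fun_prop) _ _) hchord) (sub_nonneg.2 hab)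
    _ = ((b - a) / 2) • (g a + g b) := by rw [hlin, smul_smul, div_eq_mul_inv]

theorem ConvexOn.map_half_le_smul_add_map_quarters {β : Type*} [AddCommMonoid β] [PartialOrder β]
    [Module ℝ β] {g : ℝ → β} (hg : ConvexOn ℝ (Icc 0 1) g) :
    g 2⁻¹ ≤ (2⁻¹ : ℝ) • (g 4⁻¹ + g (3 / 4)) := by
  have := hg.2 (show (4⁻¹ : ℝ) ∈ Icc 0 1 by norm_num) (show (3 / 4 : ℝ) ∈ Icc 0 1 by norm_num)
    (by norm_num : (0 : ℝ) ≤ 2⁻¹) (by norm_num : (0 : ℝ) ≤ 2⁻¹) (by norm_num)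
  rw [smul_add]
  convert this using 2
  norm_num

section UnitInterval

variable (hg : ConvexOn ℝ (Icc 0 1) g) (hcont : ContinuousOn g (Icc 0 1))
include hg hcont

theorem ConvexOn.smul_add_map_quarters_le_integral :
    (2⁻¹ : ℝ) • (g 4⁻¹ + g (3 / 4)) ≤ ∫ t in (0 : ℝ)..1, g t := by
  have hl : Icc (0 : ℝ) 2⁻¹ ⊆ Icc 0 1 := Icc_subset_Icc le_rfl (by norm_num)
  have hr : Icc (2⁻¹ : ℝ) 1 ⊆ Icc 0 1 := Icc_subset_Icc (by norm_num) le_rfl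
  calc (2⁻¹ : ℝ) • (g 4⁻¹ + g (3 / 4))
      = (2⁻¹ - 0 : ℝ) • g ((0 + 2⁻¹) / 2) + (1 - 2⁻¹ : ℝ) • g ((2⁻¹ + 1) / 2) := by
        norm_num [smul_add]
    _ ≤ (∫ t in (0 : ℝ)..2⁻¹, g t) + ∫ t in (2⁻¹ : ℝ)..1, g t :=
      add_le_add
        ((hg.subset hl (convex_Icc _ _)).smul_map_midpoint_le_integral (by norm_num)
          (hcont.mono hl))
        ((hg.subset hr (convex_Icc _ _)).smul_map_midpoint_le_integral (by norm_num)
          (hcont.mono hr))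
    _ = ∫ t in (0 : ℝ)..1, g t :=
      intervalIntegral.integral_add_adjacent_intervals
        ((hcont.mono hl).intervalIntegrable_of_Icc (by norm_num))
        ((hcont.mono hr).intervalIntegrable_of_Icc (by norm_num))

theorem ConvexOn.integral_le_smul_add_map_half :
    ∫ t in (0 : ℝ)..1, g t ≤ (2⁻¹ : ℝ) • (g 2⁻¹ + (2⁻¹ : ℝ) • (g 0 + g 1)) := by
  have hl : Icc (0 : ℝ) 2⁻¹ ⊆ Icc 0 1 := Icc_subset_Icc le_rfl (by norm_num)
  have hr : Icc (2⁻¹ : ℝ) 1 ⊆ Icc 0 1 := Icc_subset_Icc (by norm_num) le_rfl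
  calc ∫ t in (0 : ℝ)..1, g t = (∫ t in (0 : ℝ)..2⁻¹, g t) + ∫ t in (2⁻¹ : ℝ)..1, g t :=
        (intervalIntegral.integral_add_adjacent_intervals
          ((hcont.mono hl).intervalIntegrable_of_Icc (by norm_num))
          ((hcont.mono hr).intervalIntegrable_of_Icc (by norm_num))).symm
    _ ≤ ((2⁻¹ - 0 : ℝ) / 2) • (g 0 + g 2⁻¹) + ((1 - 2⁻¹ : ℝ) / 2) • (g 2⁻¹ + g 1) :=
      add_le_add
        ((hg.subset hl (convex_Icc _ _)).integral_le_smul_add (by norm_num) (hcont.mono hl))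
        ((hg.subset hr (convex_Icc _ _)).integral_le_smul_add (by norm_num) (hcont.mono hr))
    _ = (2⁻¹ : ℝ) • (g 2⁻¹ + (2⁻¹ : ℝ) • (g 0 + g 1)) := by
      norm_num
      module

end UnitInterval

end HermiteHadamard

/-- Refined Hermite–Hadamard chain for operator preinvex functions:
`f((A+V)/2) ≤ (1/2)[f((3A+V)/4) + f((A+3V)/4)] ≤ ∫₀¹ f(A + tη(B,A)) dt
  ≤ (1/2)[f((A+V)/2) + (f(A)+f(V))/2] ≤ (f(A)+f(B))/2`
in the operator order, where `V = A + η(B,A)`. -/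
theorem hermite_hadamard_chain_operator_preinvex
    {H : Type*} [NormedAddCommGroup H] [InnerProductSpace ℂ H] [CompleteSpace H]
    (S : Set (H →L[ℂ] H)) (hSsa : ∀ A ∈ S, IsSelfAdjoint A)
    (η : (H →L[ℂ] H) → (H →L[ℂ] H) → (H →L[ℂ] H))
    (hinvex : ∀ A ∈ S, ∀ B ∈ S, ∀ t ∈ Set.Icc (0:ℝ) 1, A + t • η B A ∈ S)
    (hC1 : ∀ A ∈ S, ∀ B ∈ S, ∀ t ∈ Set.Icc (0:ℝ) 1,
      η A (A + t • η B A) = (-t) • η B A)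
    (hC2 : ∀ A ∈ S, ∀ B ∈ S, ∀ t ∈ Set.Icc (0:ℝ) 1,
      η B (A + t • η B A) = (1 - t) • η B A)
    (f : ℝ → ℝ) (hf : Continuous f)
    (hpreinvex : ∀ A ∈ S, ∀ B ∈ S, ∀ t ∈ Set.Icc (0:ℝ) 1,
      cfc f (A + t • η B A) ≤ (1 - t) • cfc f A + t • cfc f B) :
    ∀ A ∈ S, ∀ B ∈ S, ∀ V : H →L[ℂ] H, V = A + η B A →
      cfc f ((2:ℝ)⁻¹ • (A + V)) ≤
        (2:ℝ)⁻¹ • (cfc f ((4:ℝ)⁻¹ • ((3:ℝ) • A + V)) + cfc f ((4:ℝ)⁻¹ • (A + (3:ℝ) • V))) ∧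
      (2:ℝ)⁻¹ • (cfc f ((4:ℝ)⁻¹ • ((3:ℝ) • A + V)) + cfc f ((4:ℝ)⁻¹ • (A + (3:ℝ) • V))) ≤
        (∫ t in (0:ℝ)..1, cfc f (A + t • η B A)) ∧
      (∫ t in (0:ℝ)..1, cfc f (A + t • η B A)) ≤
        (2:ℝ)⁻¹ • (cfc f ((2:ℝ)⁻¹ • (A + V)) + (2:ℝ)⁻¹ • (cfc f A + cfc f V)) ∧
      (2:ℝ)⁻¹ • (cfc f ((2:ℝ)⁻¹ • (A + V)) + (2:ℝ)⁻¹ • (cfc f A + cfc f V)) ≤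
        (2:ℝ)⁻¹ • (cfc f A + cfc f B) := by
  rintro A hA B hB V rfl
  let g : ℝ → H →L[ℂ] H := fun t => cfc f (A + t • η B A)
  have hconv : ConvexOn ℝ (Icc 0 1) g :=
    PreinvexOn.convexOn_segment hinvex ⟨hC1, hC2⟩ hpreinvex hA hB
  have hcont : ContinuousOn g (Icc 0 1) :=
    ContinuousOn.cfc_of_mem_nhdsSet f Filter.univ_mem (by fun_prop)
      (fun t ht => hSsa _ (hinvex A hA B hB t ht)) hf.continuousOn
  have hg₀ : g 0 = cfc f A := by simp [g]
  have hg₁ : g 1 = cfc f (A + η B A) := by simp [g]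
  rw [show (2:ℝ)⁻¹ • (A + (A + η B A)) = A + (2⁻¹ : ℝ) • η B A by module,
    show (4:ℝ)⁻¹ • ((3:ℝ) • A + (A + η B A)) = A + (4⁻¹ : ℝ) • η B A by module,
    show (4:ℝ)⁻¹ • (A + (3:ℝ) • (A + η B A)) = A + (3 / 4 : ℝ) • η B A by module]
  refine ⟨hconv.map_half_le_smul_add_map_quarters, hconv.smul_add_map_quarters_le_integral hcont,
    ?_, PreinvexOn.midpoint_trapezoid_le hpreinvex hA hB⟩
  rw [← hg₀, ← hg₁]
  exact hconv.integral_le_smul_add_map_half hcont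
end

section
/- Let f : I → ℝ⁺ be a continuous nonnegative operator convex function on an interval I ⊆ ℝ. Then for any bounded selfadjoint operators A and B on a complex Hilbert space H with spectra contained in I, any a, b ∈ (0,1) with a < b, and any x ∈ H with ‖x‖ = 1: |(1/2)∫₀ᵃ ⟨f((1−s)A + sB)x, x⟩ ds + (1/2)∫₀ᵇ ⟨f((1−s)A + sB)x, x⟩ ds − (1/(b−a))∫ₐᵇ (∫₀ᵗ ⟨f((1−s)A + sB)x, x⟩ ds) dt| ≤ ((b−a)/8)·[⟨f((1−a)A + aB)x, x⟩ + ⟨f((1−b)A + bB)x, x⟩]. -/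
/-!
Fix `x` and put `φ s = re ⟪f((1 - s) A + s B) x, x⟫`. The spectra of the operators
`(1 - s) A + s B`, `s ∈ [0, 1]`, stay in `I`, so operator convexity of `f`, read through the
monotone linear functional `T ↦ re ⟪T x, x⟫`, makes `φ` a nonnegative convex function on `[0, 1]`.
For `F t = ∫₀ᵗ φ`, integration by parts gives
`(F a + F b) / 2 - (b - a)⁻¹ ∫ₐᵇ F = (b - a)⁻¹ ∫ₐᵇ (s - (a + b) / 2) φ s`,
and bounding `φ` on `[a, b]` by its chord gives
`∫ₐᵇ |s - (a + b) / 2| φ s ≤ (b - a)³ / 8 (φ a + φ b)`.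
-/

open scoped InnerProductSpace
open Set MeasureTheory

section CStarAlgebra

variable {A : Type*} [CStarAlgebra A]

lemma IsSelfAdjoint.convexCombo {a b : A} (ha : IsSelfAdjoint a) (hb : IsSelfAdjoint b) (s : ℝ) :
    IsSelfAdjoint ((1 - s) • a + s • b) :=
  ((IsSelfAdjoint.all _).smul ha).add ((IsSelfAdjoint.all _).smul hb)

variable [PartialOrder A]

variable (A) in
def OperatorConvexOn (I : Set ℝ) (f : ℝ → ℝ) : Prop :=
  ∀ a b : A, IsSelfAdjoint a → IsSelfAdjoint b → spectrum ℝ a ⊆ I → spectrum ℝ b ⊆ I →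
    ∀ lam ∈ Icc (0 : ℝ) 1, cfc f ((1 - lam) • a + lam • b) ≤ (1 - lam) • cfc f a + lam • cfc f b

variable [StarOrderedRing A]

lemma spectrum_convexCombo_subset {I : Set ℝ} (hI : I.OrdConnected) {a b : A}
    (ha : IsSelfAdjoint a) (hb : IsSelfAdjoint b) (haI : spectrum ℝ a ⊆ I)
    (hbI : spectrum ℝ b ⊆ I) {s : ℝ} (hs : s ∈ Icc (0 : ℝ) 1) :
    spectrum ℝ ((1 - s) • a + s • b) ⊆ I := by
  intro z hz
  have : Nontrivial A := by
    by_contra h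
    rw [not_nontrivial_iff_subsingleton] at h
    simp [spectrum.of_subsingleton] at hz
  set S := spectrum ℝ a ∪ spectrum ℝ b
  have hS : IsCompact S := (spectrum.isCompact a).union (spectrum.isCompact b)
  have hSne : S.Nonempty :=
    (ContinuousFunctionalCalculus.spectrum_nonempty a ha).mono subset_union_left
  have hSI : S ⊆ I := union_subset haI hbI
  have hbounds : ∀ c, IsSelfAdjoint c → spectrum ℝ c ⊆ S →
      c ∈ Icc (algebraMap ℝ A (sInf S)) (algebraMap ℝ A (sSup S)) := fun c hc hcS =>
    ⟨(algebraMap_le_iff_le_spectrum hc).2 fun y hy => csInf_le hS.bddBelow (hcS hy),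
      (le_algebraMap_iff_spectrum_le hc).2 fun y hy => le_csSup hS.bddAbove (hcS hy)⟩
  -- order intervals are convex, and `algebraMap α ≤ c ≤ algebraMap β ↔ σ(c) ⊆ [α, β]`
  obtain ⟨hlow, hup⟩ := convex_Icc _ _ (hbounds a ha subset_union_left)
    (hbounds b hb subset_union_right) (sub_nonneg.2 hs.2) hs.1 (sub_add_cancel 1 s)
  have hsa := ha.convexCombo hb s
  exact hI.out (hSI (hS.sInf_mem hSne)) (hSI (hS.sSup_mem hSne))
    ⟨(algebraMap_le_iff_le_spectrum hsa).1 hlow z hz,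
      (le_algebraMap_iff_spectrum_le hsa).1 hup z hz⟩

lemma OperatorConvexOn.convexOn_cfc_convexCombo {I : Set ℝ} {f : ℝ → ℝ}
    (hf : OperatorConvexOn A I f) (hI : I.OrdConnected) {a b : A}
    (ha : IsSelfAdjoint a) (hb : IsSelfAdjoint b) (haI : spectrum ℝ a ⊆ I)
    (hbI : spectrum ℝ b ⊆ I) :
    ConvexOn ℝ (Icc 0 1) fun s : ℝ => cfc f ((1 - s) • a + s • b) := by
  refine ⟨convex_Icc 0 1, fun s hs t ht p q hp hq hpq => ?_⟩
  obtain rfl : p = 1 - q := by linarith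
  convert hf _ _ (ha.convexCombo hb s) (ha.convexCombo hb t)
    (spectrum_convexCombo_subset hI ha hb haI hbI hs)
    (spectrum_convexCombo_subset hI ha hb haI hbI ht) q ⟨hq, by linarith⟩ using 2
  simp only [smul_eq_mul]
  module

end CStarAlgebra

section InnerProductSpace
variable {H : Type*} [NormedAddCommGroup H] [InnerProductSpace ℂ H]

lemma ContinuousLinearMap.re_inner_le_of_le {S T : H →L[ℂ] H} (h : S ≤ T) (x : H) :
    RCLike.re ⟪S x, x⟫_ℂ ≤ RCLike.re ⟪T x, x⟫_ℂ := by
  have := ((ContinuousLinearMap.le_def S T).1 h).re_inner_nonneg_left x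
  simpa [inner_sub_left] using this

lemma ContinuousLinearMap.re_inner_smul_add_smul (S T : H →L[ℂ] H) (p q : ℝ) (x : H) :
    RCLike.re ⟪(p • S + q • T) x, x⟫_ℂ =
      p * RCLike.re ⟪S x, x⟫_ℂ + q * RCLike.re ⟪T x, x⟫_ℂ := by
  simp only [add_apply, smul_apply, inner_add_left,
    RCLike.real_smul_eq_coe_smul (K := ℂ), inner_smul_left, RCLike.conj_ofReal, map_add,
    RCLike.re_ofReal_mul]

lemma ConvexOn.re_inner_apply_self {E : Type*} [AddCommGroup E] [Module ℝ E] {s : Set E}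
    {F : E → H →L[ℂ] H} (hF : ConvexOn ℝ s F) (x : H) :
    ConvexOn ℝ s fun e => RCLike.re ⟪F e x, x⟫_ℂ := by
  refine ⟨hF.1, fun u hu v hv p q hp hq hpq => ?_⟩
  calc _ ≤ RCLike.re ⟪(p • F u + q • F v) x, x⟫_ℂ :=
        ContinuousLinearMap.re_inner_le_of_le (hF.2 hu hv hp hq hpq) x
    _ = _ := ContinuousLinearMap.re_inner_smul_add_smul _ _ _ _ x

end InnerProductSpace

lemma ConvexOn.intervalIntegrable {φ : ℝ → ℝ} {p q c d : ℝ} (hφ : ConvexOn ℝ (Icc p q) φ)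
    (hc : c ∈ Icc p q) (hd : d ∈ Icc p q) : IntervalIntegrable φ volume c d := by
  suffices IntegrableOn φ (Icc p q) from
    (this.mono_set (uIcc_subset_Icc hc hd)).intervalIntegrable
  rw [integrableOn_Icc_iff_integrableOn_Ioo]
  set M := max (φ p) (φ q)
  set m := (p + q) / 2
  refine ⟨(interior_Icc (a := p) (b := q) ▸ hφ.continuousOn_interior).aestronglyMeasurable
      measurableSet_Ioo, .restrict_of_bounded (C := |M| + 2 * |φ m|) measure_Ioo_lt_top
      ((ae_restrict_iff' measurableSet_Ioo).2 (.of_forall fun x hx => ?_))⟩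
  replace hx : x ∈ Icc p q := Ioo_subset_Icc_self hx
  have hx' : p + q - x ∈ Icc p q := ⟨by linarith [hx.2], by linarith [hx.1]⟩
  have hup (y) (hy : y ∈ Icc p q) : φ y ≤ M :=
    hφ.le_max_of_mem_Icc (left_mem_Icc.2 (hx.1.trans hx.2)) (right_mem_Icc.2 (hx.1.trans hx.2)) hy
  -- midpoint convexity `φ m ≤ (φ x + φ (p + q - x)) / 2` bounds `φ` from below
  have hmid := hφ.2 hx hx' (by norm_num : (0 : ℝ) ≤ 1 / 2) (by norm_num : (0 : ℝ) ≤ 1 / 2)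
    (by norm_num)
  simp only [smul_eq_mul] at hmid
  rw [show 1 / 2 * x + 1 / 2 * (p + q - x) = m by ring] at hmid
  rw [Real.norm_eq_abs, abs_le]
  constructor <;> linarith [hup x hx, hup _ hx', le_abs_self M, neg_abs_le M, neg_abs_le (φ m),
    le_abs_self (φ m)]

lemma ConvexOn.sub_mul_le_chord {φ : ℝ → ℝ} {a b s : ℝ} (hφ : ConvexOn ℝ (Icc a b) φ)
    (hs : s ∈ Icc a b) : (b - a) * φ s ≤ (b - s) * φ a + (s - a) * φ b := by
  rcases hs.1.eq_or_lt with rfl | has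
  · simp
  rcases hs.2.eq_or_lt with rfl | hsb
  · simp
  exact hφ.secant_mono_aux1 (left_mem_Icc.2 (has.le.trans hsb.le))
    (right_mem_Icc.2 (has.le.trans hsb.le)) has hsb

lemma integral_quadratic (a b c₀ c₁ c₂ : ℝ) :
    ∫ s in a..b, (c₂ * s ^ 2 + c₁ * s + c₀) =
      c₂ * (b ^ 3 - a ^ 3) / 3 + c₁ * (b ^ 2 - a ^ 2) / 2 + c₀ * (b - a) := by
  rw [intervalIntegral.integral_add, intervalIntegral.integral_add,
    intervalIntegral.integral_const_mul, intervalIntegral.integral_const_mul, integral_pow,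
    integral_id, intervalIntegral.integral_const, smul_eq_mul]
  · ring
  all_goals apply Continuous.intervalIntegrable; fun_prop

lemma integral_abs_sub_midpoint_mul_chord {a b : ℝ} (hab : a ≤ b) (p q : ℝ) :
    ∫ s in a..b, |s - (a + b) / 2| * ((b - s) * p + (s - a) * q) = (b - a) ^ 3 / 8 * (p + q) := by
  set m := (a + b) / 2
  have hcont : Continuous fun s => |s - m| * ((b - s) * p + (s - a) * q) := by fun_prop
  rw [← intervalIntegral.integral_add_adjacent_intervals (b := m) (hcont.intervalIntegrable _ _)
    (hcont.intervalIntegrable _ _)]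
  rw [intervalIntegral.integral_congr (g := fun s =>
      (p - q) * s ^ 2 + ((m + a) * q - (m + b) * p) * s + (m * b * p - m * a * q)),
    intervalIntegral.integral_congr (a := m) (b := b) (g := fun s =>
      (q - p) * s ^ 2 + ((m + b) * p - (m + a) * q) * s + (m * a * q - m * b * p)),
    integral_quadratic, integral_quadratic]
  · simp only [m]; ring
  · intro s hs
    rw [uIcc_of_le (by simp only [m]; linarith)] at hs
    simp only [abs_of_nonneg (sub_nonneg.2 hs.1)]
    ring
  · intro s hs
    rw [uIcc_of_le (by simp only [m]; linarith)] at hs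
    simp only [abs_of_nonpos (sub_nonpos.2 hs.2)]
    ring

lemma integral_integral_eq_integral_sub_mul {φ : ℝ → ℝ} {a b : ℝ} (hab : a ≤ b)
    (hφ : ContinuousOn φ (Icc a b)) :
    ∫ t in a..b, ∫ s in a..t, φ s = ∫ s in a..b, (b - s) * φ s := by
  have hint : IntegrableOn φ (uIcc a b) := uIcc_of_le hab ▸ hφ.integrableOn_Icc
  have hderiv : ∀ t ∈ Ioo (min a b) (max a b),
      HasDerivAt (fun t => ∫ s in a..t, φ s) (φ t) t := by
    rw [min_eq_left hab, max_eq_right hab]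
    intro t ht
    exact intervalIntegral.integral_hasDerivAt_right
      ((hφ.mono (Icc_subset_Icc_right ht.2.le)).intervalIntegrable_of_Icc ht.1.le)
      ((hφ.mono Ioo_subset_Icc_self).stronglyMeasurableAtFilter isOpen_Ioo t ht)
      (hφ.continuousAt (Icc_mem_nhds ht.1 ht.2))
  have := intervalIntegral.integral_mul_deriv_eq_deriv_mul_of_hasDerivAt (v := fun t => t - b)
    (v' := fun _ => 1) (intervalIntegral.continuousOn_primitive_interval hint) (by fun_prop)
    hderiv (fun t _ => (hasDerivAt_id t).sub_const b) hint.intervalIntegrable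
    intervalIntegrable_const
  simp only [mul_one, sub_self, mul_zero, intervalIntegral.integral_same, zero_mul,
    zero_sub] at this
  rw [this, ← intervalIntegral.integral_neg]
  congr 1 with s
  ring

lemma trapezoid_sub_average_primitive_eq {φ : ℝ → ℝ} {c a b : ℝ}
    (hca : IntervalIntegrable φ volume c a) (hab : a < b) (hφ : ContinuousOn φ (Icc a b)) :
    2⁻¹ * (∫ s in c..a, φ s) + 2⁻¹ * (∫ s in c..b, φ s) -
        (b - a)⁻¹ * ∫ t in a..b, ∫ s in c..t, φ s =
      (b - a)⁻¹ * ∫ s in a..b, (s - (a + b) / 2) * φ s := by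
  have hsplit : ∀ t ∈ uIcc a b, ∫ s in c..t, φ s = (∫ s in c..a, φ s) + ∫ s in a..t, φ s :=
    fun t ht => (intervalIntegral.integral_add_adjacent_intervals hca
      ((hφ.mono (uIcc_of_le hab.le ▸ uIcc_subset_Icc left_mem_uIcc ht)).intervalIntegrable)).symm
  have hprim : IntervalIntegrable (fun t => ∫ s in a..t, φ s) volume a b :=
    (intervalIntegral.continuousOn_primitive_interval
      (uIcc_of_le hab.le ▸ hφ.integrableOn_Icc)).intervalIntegrable
  have hφab : IntervalIntegrable φ volume a b := hφ.intervalIntegrable_of_Icc hab.le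
  have hmid : ∫ s in a..b, (s - (a + b) / 2) * φ s
      = (b - a) / 2 * (∫ s in a..b, φ s) - ∫ s in a..b, (b - s) * φ s := by
    rw [← intervalIntegral.integral_const_mul, ← intervalIntegral.integral_sub
      (hφab.const_mul _) (hφab.continuousOn_mul (by fun_prop))]
    congr 1 with s
    ring
  rw [intervalIntegral.integral_congr hsplit,
    intervalIntegral.integral_add intervalIntegrable_const hprim, intervalIntegral.integral_const,
    integral_integral_eq_integral_sub_mul hab.le hφ, hmid, hsplit b right_mem_uIcc, smul_eq_mul]
  generalize (∫ s in c..a, φ s) = I₁, (∫ s in a..b, φ s) = I₂,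
    (∫ s in a..b, (b - s) * φ s) = I₃
  field_simp [sub_ne_zero.2 hab.ne']
  ring

lemma ConvexOn.abs_integral_sub_midpoint_mul_le {φ : ℝ → ℝ} {a b : ℝ} (hab : a < b)
    (hφ : ConvexOn ℝ (Icc a b) φ) (hφ₀ : ∀ s ∈ Icc a b, 0 ≤ φ s) :
    |∫ s in a..b, (s - (a + b) / 2) * φ s| ≤ (b - a) ^ 2 / 8 * (φ a + φ b) := by
  have hφi : IntervalIntegrable φ volume a b :=
    hφ.intervalIntegrable (left_mem_Icc.2 hab.le) (right_mem_Icc.2 hab.le)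
  refine le_of_mul_le_mul_left ?_ (sub_pos.2 hab)
  calc (b - a) * |∫ s in a..b, (s - (a + b) / 2) * φ s|
      = |∫ s in a..b, (s - (a + b) / 2) * ((b - a) * φ s)| := by
        rw [← abs_of_nonneg (sub_nonneg.2 hab.le), ← abs_mul,
          abs_of_nonneg (sub_nonneg.2 hab.le), ← intervalIntegral.integral_const_mul]
        congr 2 with s
        ring
    _ ≤ ∫ s in a..b, |s - (a + b) / 2| * ((b - a) * φ s) := by
        refine (intervalIntegral.abs_integral_le_integral_abs hab.le).trans_eq
          (intervalIntegral.integral_congr fun s hs => ?_)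
        rw [uIcc_of_le hab.le] at hs
        simp only [abs_mul, abs_of_nonneg (mul_nonneg (sub_nonneg.2 hab.le) (hφ₀ s hs))]
    _ ≤ ∫ s in a..b, |s - (a + b) / 2| * ((b - s) * φ a + (s - a) * φ b) :=
        intervalIntegral.integral_mono_on hab.le
          ((hφi.const_mul _).continuousOn_mul (by fun_prop))
          (Continuous.intervalIntegrable (by fun_prop) _ _)
          fun s hs => mul_le_mul_of_nonneg_left (hφ.sub_mul_le_chord hs) (abs_nonneg _)
    _ = (b - a) ^ 3 / 8 * (φ a + φ b) := integral_abs_sub_midpoint_mul_chord hab.le _ _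
    _ = (b - a) * ((b - a) ^ 2 / 8 * (φ a + φ b)) := by ring

theorem ConvexOn.abs_trapezoid_sub_average_primitive_le {φ : ℝ → ℝ}
    {c a b d : ℝ} (hφ : ConvexOn ℝ (Icc c d) φ) (hφ₀ : ∀ s ∈ Icc a b, 0 ≤ φ s)
    (hca : c < a) (hab : a < b) (hbd : b < d) :
    |2⁻¹ * (∫ s in c..a, φ s) + 2⁻¹ * (∫ s in c..b, φ s) -
        (b - a)⁻¹ * ∫ t in a..b, ∫ s in c..t, φ s| ≤ (b - a) / 8 * (φ a + φ b) := by
  have hsub : Icc a b ⊆ Ioo c d := Icc_subset_Ioo hca hbd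
  have hcont : ContinuousOn φ (Icc a b) :=
    (interior_Icc (a := c) (b := d) ▸ hφ.continuousOn_interior).mono hsub
  rw [trapezoid_sub_average_primitive_eq
      (hφ.intervalIntegrable ⟨le_rfl, (hca.trans (hab.trans hbd)).le⟩ ⟨hca.le, (hab.trans hbd).le⟩)
      hab hcont,
    abs_mul, abs_of_pos (inv_pos.2 (sub_pos.2 hab)), inv_mul_le_iff₀ (sub_pos.2 hab)]
  calc _ ≤ (b - a) ^ 2 / 8 * (φ a + φ b) :=
        (hφ.subset (hsub.trans Ioo_subset_Icc_self) (convex_Icc a b))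
          |>.abs_integral_sub_midpoint_mul_le hab hφ₀
    _ = (b - a) * ((b - a) / 8 * (φ a + φ b)) := by ring

theorem dragomir_agarwal_operator_convex_inner_general
    {H : Type*} [NormedAddCommGroup H] [InnerProductSpace ℂ H] [CompleteSpace H]
    (I : Set ℝ) (hI : I.OrdConnected)
    (f : ℝ → ℝ) (hfnonneg : ∀ t ∈ I, 0 ≤ f t)
    (hconvex : ∀ A B : H →L[ℂ] H, IsSelfAdjoint A → IsSelfAdjoint B →
      spectrum ℝ A ⊆ I → spectrum ℝ B ⊆ I → ∀ lam ∈ Set.Icc (0:ℝ) 1,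
        cfc f ((1 - lam) • A + lam • B) ≤ (1 - lam) • cfc f A + lam • cfc f B) :
    ∀ A B : H →L[ℂ] H, IsSelfAdjoint A → IsSelfAdjoint B →
      spectrum ℝ A ⊆ I → spectrum ℝ B ⊆ I →
      ∀ a ∈ Set.Ioo (0:ℝ) 1, ∀ b ∈ Set.Ioo (0:ℝ) 1, a < b →
      ∀ x : H, ‖x‖ = 1 →
      |(2:ℝ)⁻¹ * (∫ s in (0:ℝ)..a, RCLike.re ⟪(cfc f ((1 - s) • A + s • B)) x, x⟫_ℂ) +
        (2:ℝ)⁻¹ * (∫ s in (0:ℝ)..b, RCLike.re ⟪(cfc f ((1 - s) • A + s • B)) x, x⟫_ℂ) -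
        (b - a)⁻¹ * ∫ t in a..b,
          (∫ s in (0:ℝ)..t, RCLike.re ⟪(cfc f ((1 - s) • A + s • B)) x, x⟫_ℂ)| ≤
      (b - a) / 8 *
        (RCLike.re ⟪(cfc f ((1 - a) • A + a • B)) x, x⟫_ℂ +
          RCLike.re ⟪(cfc f ((1 - b) • A + b • B)) x, x⟫_ℂ) := by
  intro A B hA hB hAI hBI a ha b hb hab x _
  have hop : OperatorConvexOn (H →L[ℂ] H) I f := hconvex
  have hφ := (hop.convexOn_cfc_convexCombo hI hA hB hAI hBI).re_inner_apply_self x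
  refine hφ.abs_trapezoid_sub_average_primitive_le (fun s hs => ?_) ha.1 hab hb.2
  have hs01 : s ∈ Icc (0 : ℝ) 1 := ⟨ha.1.le.trans hs.1, hs.2.trans hb.2.le⟩
  have hpos : 0 ≤ cfc f ((1 - s) • A + s • B) :=
    cfc_nonneg fun z hz => hfnonneg z (spectrum_convexCombo_subset hI hA hB hAI hBI hs01 hz)
  exact ((ContinuousLinearMap.nonneg_iff_isPositive _).1 hpos).re_inner_nonneg_left x

/-- An estimate of Hermite–Hadamard type for the scalar-valued function
`s ↦ ⟨f((1−s)A + sB)x, x⟩` attached to a nonnegative operator convex function `f` on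
an interval `I`. -/
theorem dragomir_agarwal_operator_convex_inner
    {H : Type*} [NormedAddCommGroup H] [InnerProductSpace ℂ H] [CompleteSpace H]
    (I : Set ℝ) (hI : I.OrdConnected)
    (f : ℝ → ℝ) (hf : ContinuousOn f I) (hfnonneg : ∀ t ∈ I, 0 ≤ f t)
    (hconvex : ∀ A B : H →L[ℂ] H, IsSelfAdjoint A → IsSelfAdjoint B →
      spectrum ℝ A ⊆ I → spectrum ℝ B ⊆ I → ∀ lam ∈ Set.Icc (0:ℝ) 1,
        cfc f ((1 - lam) • A + lam • B) ≤ (1 - lam) • cfc f A + lam • cfc f B) :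
    ∀ A B : H →L[ℂ] H, IsSelfAdjoint A → IsSelfAdjoint B →
      spectrum ℝ A ⊆ I → spectrum ℝ B ⊆ I →
      ∀ a ∈ Set.Ioo (0:ℝ) 1, ∀ b ∈ Set.Ioo (0:ℝ) 1, a < b →
      ∀ x : H, ‖x‖ = 1 →
      |(2:ℝ)⁻¹ * (∫ s in (0:ℝ)..a, RCLike.re ⟪(cfc f ((1 - s) • A + s • B)) x, x⟫_ℂ) +
        (2:ℝ)⁻¹ * (∫ s in (0:ℝ)..b, RCLike.re ⟪(cfc f ((1 - s) • A + s • B)) x, x⟫_ℂ) -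
        (b - a)⁻¹ * ∫ t in a..b,
          (∫ s in (0:ℝ)..t, RCLike.re ⟪(cfc f ((1 - s) • A + s • B)) x, x⟫_ℂ)| ≤
      (b - a) / 8 *
        (RCLike.re ⟪(cfc f ((1 - a) • A + a • B)) x, x⟫_ℂ +
          RCLike.re ⟪(cfc f ((1 - b) • A + b • B)) x, x⟫_ℂ) :=
  dragomir_agarwal_operator_convex_inner_general I hI f hfnonneg hconvex
end

section
/- Assume a, b ∈ ℝ with a < b and f : [a, b] → ℝ is a continuous function that is differentiable on (a, b). If |f'| is convex on [a, b], then |(f(a) + f(b))/2 − (1/(b−a))∫ₐᵇ f(x) dx| ≤ (b−a)(|f'(a)| + |f'(b)|)/8. -/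
/-!
Integration by parts against the kernel `x - m`, `m = (a + b) / 2`, turns the trapezoid error
into `(b - a)⁻¹ ∫ (x - m) f'(x) dx`. Convexity bounds `|f'|` by its chord, an affine function
`p + q (x - m)` with `p = (|f'(a)| + |f'(b)|) / 2`. Against the even weight `|x - m|` the odd
part `q (x - m)` integrates to zero, and `∫ |x - m| = (b - a)² / 4`.
-/

open MeasureTheory Set intervalIntegral
open scoped Interval

theorem ConvexOn.le_chord {g : ℝ → ℝ} {a b x : ℝ} (hab : a < b) (hg : ConvexOn ℝ (Icc a b) g)
    (hx : x ∈ Icc a b) : g x ≤ ((b - x) * g a + (x - a) * g b) / (b - a) := by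
  have hba : 0 < b - a := sub_pos.2 hab
  have hconvex := hg.2 (left_mem_Icc.2 hab.le) (right_mem_Icc.2 hab.le)
    (div_nonneg (sub_nonneg.2 hx.2) hba.le) (div_nonneg (sub_nonneg.2 hx.1) hba.le)
    (by field_simp; ring)
  have hcomb : (b - x) / (b - a) * a + (x - a) / (b - a) * b = x := by field_simp; ring
  simp only [smul_eq_mul, hcomb] at hconvex
  exact hconvex.trans_eq (by field_simp)

theorem intervalIntegrable_of_hasDerivAt_of_norm_le {E : Type*} [NormedAddCommGroup E]
    [NormedSpace ℝ E] [CompleteSpace E] {f f' : ℝ → E} {a b C : ℝ} (hab : a ≤ b)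
    (hf : ∀ x ∈ Ioo a b, HasDerivAt f (f' x) x) (hC : ∀ x ∈ Ioo a b, ‖f' x‖ ≤ C) :
    IntervalIntegrable f' volume a b := by
  rw [intervalIntegrable_iff_integrableOn_Ioo_of_le hab]
  have hderiv : EqOn (deriv f) f' (Ioo a b) := fun x hx => (hf x hx).deriv
  refine IntegrableOn.congr_fun ?_ hderiv measurableSet_Ioo
  refine Measure.integrableOn_of_bounded (M := C) measure_Ioo_lt_top.ne
    (aestronglyMeasurable_deriv f _) ?_
  filter_upwards [ae_restrict_mem measurableSet_Ioo] with x hx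
  exact hderiv hx ▸ hC x hx

theorem integral_sub_midpoint_mul_deriv {f f' : ℝ → ℝ} {a b : ℝ} (hab : a ≤ b)
    (hf : ∀ x ∈ Icc a b, HasDerivWithinAt f (f' x) (Icc a b) x)
    (hf' : IntervalIntegrable f' volume a b) :
    ∫ x in a..b, (x - (a + b) / 2) * f' x = (b - a) / 2 * (f a + f b) - ∫ x in a..b, f x := by
  rw [← uIcc_of_le hab] at hf
  have hu : ∀ x ∈ [[a, b]], HasDerivWithinAt (fun x => x - (a + b) / 2) 1 [[a, b]] x :=
    fun x _ => (hasDerivWithinAt_id x _).sub_const _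
  rw [integral_mul_deriv_eq_deriv_mul_of_hasDerivWithinAt hu hf intervalIntegrable_const hf']
  simp only [one_mul]
  ring

theorem integral_abs_mul_affine_symmetric {h : ℝ} (hh : 0 ≤ h) (p q : ℝ) :
    ∫ y in -h..h, |y| * (p + q * y) = p * h ^ 2 := by
  have hint : ∀ c d : ℝ, IntervalIntegrable (fun y => |y| * (p + q * y)) volume c d :=
    fun c d => by apply Continuous.intervalIntegrable; fun_prop
  have hpoly (c d : ℝ) :
      ∫ y in c..d, (p * y + q * y ^ 2) = p * ((d ^ 2 - c ^ 2) / 2) + q * ((d ^ 3 - c ^ 3) / 3) := by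
    rw [intervalIntegral.integral_add (intervalIntegrable_id.const_mul p)
      ((intervalIntegrable_pow 2).const_mul q), intervalIntegral.integral_const_mul,
      intervalIntegral.integral_const_mul, integral_id, integral_pow]
    norm_num
  rw [← integral_add_adjacent_intervals (hint _ 0) (hint 0 _)]
  have hneg : ∫ y in -h..0, |y| * (p + q * y) = -∫ y in -h..0, (p * y + q * y ^ 2) := by
    rw [← intervalIntegral.integral_neg]
    refine integral_congr fun y hy => ?_
    rw [uIcc_of_le (neg_nonpos.2 hh)] at hy
    simp only [abs_of_nonpos hy.2]; ring
  have hpos : ∫ y in 0..h, |y| * (p + q * y) = ∫ y in 0..h, (p * y + q * y ^ 2) := by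
    refine integral_congr fun y hy => ?_
    rw [uIcc_of_le hh] at hy
    simp only [abs_of_nonneg hy.1]; ring
  rw [hneg, hpos, hpoly, hpoly]
  ring

theorem integral_abs_sub_midpoint_mul_affine {a b : ℝ} (hab : a ≤ b) (p q : ℝ) :
    ∫ x in a..b, |x - (a + b) / 2| * (p + q * (x - (a + b) / 2)) = p * (b - a) ^ 2 / 4 := by
  rw [integral_comp_sub_right (fun y => |y| * (p + q * y))]
  have hlo : a - (a + b) / 2 = -((b - a) / 2) := by ring
  have hhi : b - (a + b) / 2 = (b - a) / 2 := by ring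
  rw [hlo, hhi, integral_abs_mul_affine_symmetric (by linarith) p q]
  ring

theorem dragomir_agarwal_real_general
    (a b : ℝ) (hab : a < b) (f f' : ℝ → ℝ)
    (hderiv : ∀ x ∈ Set.Icc a b, HasDerivWithinAt f (f' x) (Set.Icc a b) x)
    (hconv : ConvexOn ℝ (Set.Icc a b) (fun x => |f' x|)) :
    |(f a + f b) / 2 - (b - a)⁻¹ * ∫ x in a..b, f x| ≤
      (b - a) * (|f' a| + |f' b|) / 8 := by
  set m := (a + b) / 2
  set p := (|f' a| + |f' b|) / 2
  set q := (|f' b| - |f' a|) / (b - a)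
  have hba : 0 < b - a := sub_pos.2 hab
  have hchord (x) (hx : x ∈ Icc a b) : |f' x| ≤ p + q * (x - m) :=
    (hconv.le_chord hab hx).trans_eq (by simp only [p, q, m]; field_simp; ring)
  have hf' : IntervalIntegrable f' volume a b :=
    intervalIntegrable_of_hasDerivAt_of_norm_le hab.le
      (fun x hx => (hderiv x (Ioo_subset_Icc_self hx)).hasDerivAt (Icc_mem_nhds hx.1 hx.2))
      (fun x hx => hconv.le_on_segment (left_mem_Icc.2 hab.le) (right_mem_Icc.2 hab.le)
        (by rw [segment_eq_Icc hab.le]; exact Ioo_subset_Icc_self hx))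
  have hbound : |∫ x in a..b, (x - m) * f' x| ≤ p * (b - a) ^ 2 / 4 :=
    calc |∫ x in a..b, (x - m) * f' x| ≤ ∫ x in a..b, |(x - m) * f' x| :=
          abs_integral_le_integral_abs hab.le
      _ ≤ ∫ x in a..b, |x - m| * (p + q * (x - m)) := by
          refine integral_mono_on hab.le ?_ ?_ fun x hx => ?_
          · exact (hf'.continuousOn_mul (by fun_prop)).abs
          · exact (by fun_prop : Continuous _).intervalIntegrable _ _
          · rw [abs_mul]; exact mul_le_mul_of_nonneg_left (hchord x hx) (abs_nonneg _)
      _ = p * (b - a) ^ 2 / 4 := integral_abs_sub_midpoint_mul_affine hab.le p q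
  have htrapezoid : (f a + f b) / 2 - (b - a)⁻¹ * ∫ x in a..b, f x
      = (b - a)⁻¹ * ∫ x in a..b, (x - m) * f' x := by
    rw [integral_sub_midpoint_mul_deriv hab.le hderiv hf']; field_simp
  rw [htrapezoid, abs_mul, abs_of_pos (inv_pos.2 hba), inv_mul_le_iff₀ hba]
  exact hbound.trans_eq (by simp only [p]; ring)

/-- Dragomir–Agarwal: If `f : [a,b] → ℝ` is continuous, differentiable,
and `|f'|` is convex on `[a,b]`, then
`|(f(a)+f(b))/2 − (1/(b−a))∫ₐᵇ f| ≤ (b−a)(|f'(a)|+|f'(b)|)/8`. -/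
theorem dragomir_agarwal_real
    (a b : ℝ) (hab : a < b) (f f' : ℝ → ℝ)
    (hcont : ContinuousOn f (Set.Icc a b))
    (hderiv : ∀ x ∈ Set.Icc a b, HasDerivWithinAt f (f' x) (Set.Icc a b) x)
    (hconv : ConvexOn ℝ (Set.Icc a b) (fun x => |f' x|)) :
    |(f a + f b) / 2 - (b - a)⁻¹ * ∫ x in a..b, f x| ≤
      (b - a) * (|f' a| + |f' b|) / 8 :=
  dragomir_agarwal_real_general a b hab f f' hderiv hconv
end

section
/- Let H be a complex Hilbert space with identity operator 1_H, let T := {A ∈ B(H)_sa : −3·1_H < A < −1·1_H}, U := {A ∈ B(H)_sa : 1_H < A < 4·1_H}, S := T ∪ U, and define η₁ : S × S → B(H)_sa by η₁(A,B) = A − B if A, B ∈ U or A, B ∈ T, η₁(A,B) = 1_H − B if A ∈ T and B ∈ U, and η₁(A,B) = −1_H − B if A ∈ U and B ∈ T. Then the function f(t) = t² is operator preinvex with respect to η₁ on S; that is, for all A, B ∈ S and t ∈ [0,1], (A + tη₁(B,A))² ≤ (1−t)A² + tB² in the operator order. -/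
set_option synthInstance.maxHeartbeats 1000000
set_option maxHeartbeats 1000000

private lemma aux_nonneg_of_spectrum {H : Type*} [NormedAddCommGroup H]
    [InnerProductSpace ℂ H] [CompleteSpace H] (X : H →L[ℂ] H)
    (hX : IsSelfAdjoint X) (h : spectrum ℝ X ⊆ Set.Ioi 0) : 0 ≤ X :=
  (StarOrderedRing.nonneg_iff_spectrum_nonneg X hX).mpr fun _ hx => le_of_lt (h hx)

private lemma aux_sq_sub_one_U {H : Type*} [NormedAddCommGroup H]
    [InnerProductSpace ℂ H] [CompleteSpace H] (B : H →L[ℂ] H)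
    (hB : IsSelfAdjoint B) (h : spectrum ℝ (B - 1) ⊆ Set.Ioi 0) :
    (0 : H →L[ℂ] H) ≤ B ^ 2 - 1 := by
  have hsa : IsSelfAdjoint (B - (1 : H →L[ℂ] H)) := hB.sub (IsSelfAdjoint.one _)
  have h1 : (0 : H →L[ℂ] H) ≤ B - 1 := aux_nonneg_of_spectrum _ hsa h
  have hid : B ^ 2 - 1 = (B - 1) ^ 2 + (2:ℝ) • (B - 1) := by
    simp only [pow_two, sub_mul, mul_sub, mul_one, one_mul]
    module
  rw [hid]
  exact add_nonneg hsa.sq_nonneg (smul_nonneg (by norm_num) h1)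

private lemma aux_sq_sub_one_T {H : Type*} [NormedAddCommGroup H]
    [InnerProductSpace ℂ H] [CompleteSpace H] (B : H →L[ℂ] H)
    (hB : IsSelfAdjoint B) (h : spectrum ℝ ((-1:ℝ) • (1 : H →L[ℂ] H) - B) ⊆ Set.Ioi 0) :
    (0 : H →L[ℂ] H) ≤ B ^ 2 - 1 := by
  have he : (-1:ℝ) • (1 : H →L[ℂ] H) - B = -1 - B := by
    rw [neg_smul, one_smul]
  rw [he] at h
  have hsa : IsSelfAdjoint (-1 - B : H →L[ℂ] H) :=
    (IsSelfAdjoint.one (H →L[ℂ] H)).neg.sub hB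
  have h1 : (0 : H →L[ℂ] H) ≤ -1 - B := aux_nonneg_of_spectrum _ hsa h
  have hid : B ^ 2 - 1 = (-1 - B) ^ 2 + (2:ℝ) • (-1 - B) := by
    simp only [pow_two, sub_mul, mul_sub, mul_one, one_mul, neg_mul, mul_neg, neg_neg]
    module
  rw [hid]
  exact add_nonneg hsa.sq_nonneg (smul_nonneg (by norm_num) h1)

/-- The function `f(t) = t²` is operator preinvex with respect to the
map `η₁` on `S = T ∪ U`, where `T = (−3·1_H, −1·1_H)`, `U = (1_H, 4·1_H)` (intervals
in the strict Loewner order: `A < B` iff the spectrum of `B − A` lies in `(0,∞)`). -/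
theorem sq_operator_preinvex_eta_one
    {H : Type*} [NormedAddCommGroup H] [InnerProductSpace ℂ H] [CompleteSpace H]
    (T U : Set (H →L[ℂ] H))
    (hT : T = {A | IsSelfAdjoint A ∧ spectrum ℝ (A - (-3:ℝ) • (1 : H →L[ℂ] H)) ⊆ Set.Ioi 0 ∧
      spectrum ℝ ((-1:ℝ) • (1 : H →L[ℂ] H) - A) ⊆ Set.Ioi 0})
    (hU : U = {A | IsSelfAdjoint A ∧ spectrum ℝ (A - (1 : H →L[ℂ] H)) ⊆ Set.Ioi 0 ∧
      spectrum ℝ ((4:ℝ) • (1 : H →L[ℂ] H) - A) ⊆ Set.Ioi 0})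
    (η₁ : (H →L[ℂ] H) → (H →L[ℂ] H) → (H →L[ℂ] H))
    (hηUU : ∀ A B, A ∈ U → B ∈ U → η₁ A B = A - B)
    (hηTT : ∀ A B, A ∈ T → B ∈ T → η₁ A B = A - B)
    (hηTU : ∀ A B, A ∈ T → B ∈ U → η₁ A B = 1 - B)
    (hηUT : ∀ A B, A ∈ U → B ∈ T → η₁ A B = -1 - B) :
    ∀ A ∈ T ∪ U, ∀ B ∈ T ∪ U, ∀ t ∈ Set.Icc (0:ℝ) 1,
      (A + t • η₁ B A) ^ 2 ≤ (1 - t) • A ^ 2 + t • B ^ 2 := by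
  intro A hA B hB t ht
  obtain ⟨ht0, ht1⟩ := ht
  have hst : (0:ℝ) ≤ t * (1 - t) := mul_nonneg ht0 (by linarith)
  have hAsa : IsSelfAdjoint A := by
    rcases hA with h | h
    · exact (hT ▸ h).1
    · exact (hU ▸ h).1
  have hBsa : IsSelfAdjoint B := by
    rcases hB with h | h
    · exact (hT ▸ h).1
    · exact (hU ▸ h).1
  -- same-set case helper
  have same : η₁ B A = B - A →
      (A + t • η₁ B A) ^ 2 ≤ (1 - t) • A ^ 2 + t • B ^ 2 := by
    intro hη
    rw [hη, ← sub_nonneg]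
    have hid : (1 - t) • A ^ 2 + t • B ^ 2 - (A + t • (B - A)) ^ 2
        = (t * (1 - t)) • (B - A) ^ 2 := by
      simp only [pow_two, smul_sub, sub_mul, mul_sub, smul_mul_assoc, mul_smul_comm,
        smul_smul, sub_smul, one_smul, add_mul, mul_add]
      module
    rw [hid]
    exact smul_nonneg hst (hBsa.sub hAsa).sq_nonneg
  rcases hA with hA | hA <;> rcases hB with hB | hB
  · exact same (hηTT B A hB hA)
  · -- A ∈ T, B ∈ U : η₁ B A = -1 - A
    rw [hηUT B A hB hA, ← sub_nonneg]
    have hid : (1 - t) • A ^ 2 + t • B ^ 2 - (A + t • (-1 - A)) ^ 2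
        = (t * (1 - t)) • (A + 1) ^ 2 + t • (B ^ 2 - 1) := by
      simp only [pow_two, smul_sub, sub_mul, mul_sub, smul_mul_assoc, mul_smul_comm,
        smul_smul, sub_smul, one_smul, add_mul, mul_add, mul_one, one_mul, mul_neg,
        neg_mul, smul_neg]
      module
    rw [hid]
    have hB2 : (0 : H →L[ℂ] H) ≤ B ^ 2 - 1 := aux_sq_sub_one_U B (hU ▸ hB).1 (hU ▸ hB).2.1
    exact add_nonneg (smul_nonneg hst (hAsa.add (IsSelfAdjoint.one _)).sq_nonneg)
      (smul_nonneg ht0 hB2)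
  · -- A ∈ U, B ∈ T : η₁ B A = 1 - A
    rw [hηTU B A hB hA, ← sub_nonneg]
    have hid : (1 - t) • A ^ 2 + t • B ^ 2 - (A + t • (1 - A)) ^ 2
        = (t * (1 - t)) • (A - 1) ^ 2 + t • (B ^ 2 - 1) := by
      simp only [pow_two, smul_sub, sub_mul, mul_sub, smul_mul_assoc, mul_smul_comm,
        smul_smul, sub_smul, one_smul, add_mul, mul_add, mul_one, one_mul, mul_neg,
        neg_mul, smul_neg]
      module
    rw [hid]
    have hB2 : (0 : H →L[ℂ] H) ≤ B ^ 2 - 1 := aux_sq_sub_one_T B (hT ▸ hB).1 (hT ▸ hB).2.2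
    exact add_nonneg (smul_nonneg hst (hAsa.sub (IsSelfAdjoint.one _)).sq_nonneg)
      (smul_nonneg ht0 hB2)
  · exact same (hηUU B A hB hA)
end

section
/- Let H be a complex Hilbert space with identity operator 1_H, let T := {A ∈ B(H)_sa : −3·1_H < A < −1·1_H}, U := {A ∈ B(H)_sa : 1_H < A < 4·1_H}, S := T ∪ U, and define η₁ : S × S → B(H)_sa by η₁(A,B) = A − B if A, B ∈ U or A, B ∈ T, η₁(A,B) = 1_H − B if A ∈ T and B ∈ U, and η₁(A,B) = −1_H − B if A ∈ U and B ∈ T. Then for every A, B ∈ S, with V := A + η₁(B,A), the following chain of inequalities holds in the operator order: ((A + V)/2)² ≤ (1/2)[((3A + V)/4)² + ((A + 3V)/4)²] ≤ ∫₀¹ (A + tη₁(B,A))² dt ≤ (1/2)[((A + V)/2)² + (A² + V²)/2] ≤ (A² + B²)/2. -/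
set_option synthInstance.maxHeartbeats 1000000
set_option maxHeartbeats 2000000

section Helpers

variable {H : Type*} [NormedAddCommGroup H] [InnerProductSpace ℂ H] [CompleteSpace H]

theorem hh_aux_sq_nonneg (y : H →L[ℂ] H) (hy : IsSelfAdjoint y) : 0 ≤ y * y := by
  simpa only [hy.star_eq] using star_mul_self_nonneg y

theorem hh_aux_smul_sq_nonneg (c : ℝ) (hc : 0 ≤ c) (y : H →L[ℂ] H) (hy : IsSelfAdjoint y) :
    0 ≤ c • (y * y) :=
  smul_nonneg hc (hh_aux_sq_nonneg y hy)

theorem hh_aux_integral (A D : H →L[ℂ] H) :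
    (∫ t in (0:ℝ)..1, (A + t • D) ^ 2)
      = A * A + (2:ℝ)⁻¹ • (A * D + D * A) + (3:ℝ)⁻¹ • (D * D) := by
  have hfun : ∀ t : ℝ, (A + t • D) ^ 2
      = A * A + t • (A * D + D * A) + (t ^ 2) • (D * D) := by
    intro t
    simp only [pow_two, add_mul, mul_add, smul_mul_assoc, mul_smul_comm, smul_smul]
    module
  simp only [hfun]
  rw [intervalIntegral.integral_add, intervalIntegral.integral_add]
  · rw [intervalIntegral.integral_const, intervalIntegral.integral_smul_const,
      intervalIntegral.integral_smul_const, integral_id, integral_pow]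
    norm_num
  · exact intervalIntegrable_const
  · exact (continuous_id.smul continuous_const).intervalIntegrable 0 1
  · exact (intervalIntegrable_const.add
      ((continuous_id.smul continuous_const).intervalIntegrable 0 1))
  · exact ((continuous_pow 2).smul continuous_const).intervalIntegrable 0 1

theorem hh_aux_nonneg_of_spectrum (X : H →L[ℂ] H) (hX : IsSelfAdjoint X)
    (h : spectrum ℝ X ⊆ Set.Ioi 0) : 0 ≤ X := by
  rw [StarOrderedRing.nonneg_iff_spectrum_nonneg (R := ℝ) X hX]
  exact fun x hx => (h hx).le

theorem hh_aux_one_le_sq (B : H →L[ℂ] H) (h : 1 ≤ B) : (1 : H →L[ℂ] H) ≤ B * B := by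
  have := CStarAlgebra.pow_monotone h (show 0 ≤ 2 by norm_num)
  simpa [pow_two] using this

end Helpers

/-- The Hermite–Hadamard chain for the operator preinvex function
`f(t) = t²` with respect to the map `η₁` on `S = T ∪ U`, where `T = (−3·1_H, −1·1_H)`,
`U = (1_H, 4·1_H)` (intervals in the strict Loewner order: `A < B` iff the spectrum of
`B − A` lies in `(0,∞)`), and `V = A + η₁(B,A)`. -/
theorem hermite_hadamard_chain_sq_eta_one
    {H : Type*} [NormedAddCommGroup H] [InnerProductSpace ℂ H] [CompleteSpace H]
    (T U : Set (H →L[ℂ] H))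
    (hT : T = {A | IsSelfAdjoint A ∧ spectrum ℝ (A - (-3:ℝ) • (1 : H →L[ℂ] H)) ⊆ Set.Ioi 0 ∧
      spectrum ℝ ((-1:ℝ) • (1 : H →L[ℂ] H) - A) ⊆ Set.Ioi 0})
    (hU : U = {A | IsSelfAdjoint A ∧ spectrum ℝ (A - (1 : H →L[ℂ] H)) ⊆ Set.Ioi 0 ∧
      spectrum ℝ ((4:ℝ) • (1 : H →L[ℂ] H) - A) ⊆ Set.Ioi 0})
    (η₁ : (H →L[ℂ] H) → (H →L[ℂ] H) → (H →L[ℂ] H))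
    (hηUU : ∀ A B, A ∈ U → B ∈ U → η₁ A B = A - B)
    (hηTT : ∀ A B, A ∈ T → B ∈ T → η₁ A B = A - B)
    (hηTU : ∀ A B, A ∈ T → B ∈ U → η₁ A B = 1 - B)
    (hηUT : ∀ A B, A ∈ U → B ∈ T → η₁ A B = -1 - B) :
    ∀ A ∈ T ∪ U, ∀ B ∈ T ∪ U, ∀ V : H →L[ℂ] H, V = A + η₁ B A →
      ((2:ℝ)⁻¹ • (A + V)) ^ 2 ≤
        (2:ℝ)⁻¹ • (((4:ℝ)⁻¹ • ((3:ℝ) • A + V)) ^ 2 + ((4:ℝ)⁻¹ • (A + (3:ℝ) • V)) ^ 2) ∧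
      (2:ℝ)⁻¹ • (((4:ℝ)⁻¹ • ((3:ℝ) • A + V)) ^ 2 + ((4:ℝ)⁻¹ • (A + (3:ℝ) • V)) ^ 2) ≤
        (∫ t in (0:ℝ)..1, (A + t • η₁ B A) ^ 2) ∧
      (∫ t in (0:ℝ)..1, (A + t • η₁ B A) ^ 2) ≤
        (2:ℝ)⁻¹ • (((2:ℝ)⁻¹ • (A + V)) ^ 2 + (2:ℝ)⁻¹ • (A ^ 2 + V ^ 2)) ∧
      (2:ℝ)⁻¹ • (((2:ℝ)⁻¹ • (A + V)) ^ 2 + (2:ℝ)⁻¹ • (A ^ 2 + V ^ 2)) ≤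
        (2:ℝ)⁻¹ • (A ^ 2 + B ^ 2) := by
  intro A hA B hB V hV
  -- selfadjointness of A and B
  have hAsa : IsSelfAdjoint A := by
    rcases hA with h | h
    · rw [hT] at h; exact h.1
    · rw [hU] at h; exact h.1
  have hBsa : IsSelfAdjoint B := by
    rcases hB with h | h
    · rw [hT] at h; exact h.1
    · rw [hU] at h; exact h.1
  set D := η₁ B A with hD
  have hDsa : IsSelfAdjoint D := by
    rcases hB with hb | hb <;> rcases hA with ha | ha
    · rw [hD, hηTT B A hb ha]; exact hBsa.sub hAsa
    · rw [hD, hηTU B A hb ha]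
      exact ((IsSelfAdjoint.one _)).sub hAsa
    · rw [hD, hηUT B A hb ha]
      exact (((IsSelfAdjoint.one (H →L[ℂ] H))).neg).sub hAsa
    · rw [hD, hηUU B A hb ha]; exact hBsa.sub hAsa
  subst hV
  refine ⟨?_, ?_, ?_, ?_⟩
  · -- first inequality
    rw [← sub_nonneg]
    have key : (2:ℝ)⁻¹ • (((4:ℝ)⁻¹ • ((3:ℝ) • A + (A + D))) ^ 2
          + ((4:ℝ)⁻¹ • (A + (3:ℝ) • (A + D))) ^ 2)
        - ((2:ℝ)⁻¹ • (A + (A + D))) ^ 2 = (16:ℝ)⁻¹ • (D * D) := by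
      simp only [pow_two, smul_add, mul_add, add_mul, smul_mul_assoc, mul_smul_comm, smul_smul]
      module
    rw [key]
    exact hh_aux_smul_sq_nonneg _ (by norm_num) _ hDsa
  · rw [hh_aux_integral A D, ← sub_nonneg]
    have key : A * A + (2:ℝ)⁻¹ • (A * D + D * A) + (3:ℝ)⁻¹ • (D * D)
        - (2:ℝ)⁻¹ • (((4:ℝ)⁻¹ • ((3:ℝ) • A + (A + D))) ^ 2
          + ((4:ℝ)⁻¹ • (A + (3:ℝ) • (A + D))) ^ 2) = (48:ℝ)⁻¹ • (D * D) := by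
      simp only [pow_two, smul_add, mul_add, add_mul, smul_mul_assoc, mul_smul_comm, smul_smul]
      module
    rw [key]
    exact hh_aux_smul_sq_nonneg _ (by norm_num) _ hDsa
  · rw [hh_aux_integral A D, ← sub_nonneg]
    have key : (2:ℝ)⁻¹ • (((2:ℝ)⁻¹ • (A + (A + D))) ^ 2 + (2:ℝ)⁻¹ • (A ^ 2 + (A + D) ^ 2))
        - (A * A + (2:ℝ)⁻¹ • (A * D + D * A) + (3:ℝ)⁻¹ • (D * D)) = (24:ℝ)⁻¹ • (D * D) := by
      simp only [pow_two, smul_add, mul_add, add_mul, smul_mul_assoc, mul_smul_comm, smul_smul]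
      module
    rw [key]
    exact hh_aux_smul_sq_nonneg _ (by norm_num) _ hDsa
  · -- fourth inequality: case analysis
    rw [← sub_nonneg]
    rcases hB with hb | hb <;> rcases hA with ha | ha
    · -- both in T : D = B - A
      have hDe : D = B - A := hηTT B A hb ha
      have key : (2:ℝ)⁻¹ • (A ^ 2 + B ^ 2)
          - (2:ℝ)⁻¹ • (((2:ℝ)⁻¹ • (A + (A + D))) ^ 2 + (2:ℝ)⁻¹ • (A ^ 2 + (A + D) ^ 2))
          = (8:ℝ)⁻¹ • ((A - B) * (A - B)) := by
        rw [hDe]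
        simp only [pow_two, smul_add, mul_add, add_mul, sub_mul, mul_sub,
          smul_mul_assoc, mul_smul_comm, smul_smul]
        module
      rw [key]
      exact hh_aux_smul_sq_nonneg _ (by norm_num) _ (hAsa.sub hBsa)
    ·
      have hDe : D = 1 - A := hηTU B A hb ha
      have hBle : (1 : H →L[ℂ] H) ≤ -B := by
        rw [hT] at hb
        have := hh_aux_nonneg_of_spectrum _ ((IsSelfAdjoint.smul (by norm_num : star (-1:ℝ) = -1)
          (IsSelfAdjoint.one (H →L[ℂ] H))).sub hBsa) hb.2.2
        rw [← sub_nonneg]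
        calc (0 : H →L[ℂ] H) ≤ (-1:ℝ) • 1 - B := this
        _ = -B - 1 := by module
      have hB2 : (1 : H →L[ℂ] H) ≤ B * B := by
        have := hh_aux_one_le_sq (-B) hBle
        simpa [neg_mul_neg] using this
      have key : (2:ℝ)⁻¹ • (A ^ 2 + B ^ 2)
          - (2:ℝ)⁻¹ • (((2:ℝ)⁻¹ • (A + (A + D))) ^ 2 + (2:ℝ)⁻¹ • (A ^ 2 + (A + D) ^ 2))
          = (2:ℝ)⁻¹ • (B * B - 1) + (8:ℝ)⁻¹ • ((A - 1) * (A - 1)) := by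
        rw [hDe]
        simp only [pow_two, smul_add, mul_add, add_mul, sub_mul, mul_sub, mul_one, one_mul,
          smul_mul_assoc, mul_smul_comm, smul_smul, smul_sub]
        module
      rw [key]
      refine add_nonneg (smul_nonneg (by norm_num) (by rwa [sub_nonneg])) ?_
      exact hh_aux_smul_sq_nonneg _ (by norm_num) _ (hAsa.sub ((IsSelfAdjoint.one _)))
    · -- A ∈ T, B ∈ U : D = -1 - A
      have hDe : D = -1 - A := hηUT B A hb ha
      have hBle : (1 : H →L[ℂ] H) ≤ B := by
        rw [hU] at hb
        have := hh_aux_nonneg_of_spectrum _ (hBsa.sub ((IsSelfAdjoint.one _))) hb.2.1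
        rwa [sub_nonneg] at this
      have hB2 : (1 : H →L[ℂ] H) ≤ B * B := hh_aux_one_le_sq B hBle
      have key : (2:ℝ)⁻¹ • (A ^ 2 + B ^ 2)
          - (2:ℝ)⁻¹ • (((2:ℝ)⁻¹ • (A + (A + D))) ^ 2 + (2:ℝ)⁻¹ • (A ^ 2 + (A + D) ^ 2))
          = (2:ℝ)⁻¹ • (B * B - 1) + (8:ℝ)⁻¹ • ((A + 1) * (A + 1)) := by
        rw [hDe]
        simp only [pow_two, smul_add, mul_add, add_mul, sub_mul, mul_sub, mul_one, one_mul,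
          neg_mul, mul_neg, smul_mul_assoc, mul_smul_comm, smul_smul, smul_sub]
        module
      rw [key]
      refine add_nonneg (smul_nonneg (by norm_num) (by rwa [sub_nonneg])) ?_
      exact hh_aux_smul_sq_nonneg _ (by norm_num) _ (hAsa.add ((IsSelfAdjoint.one _)))
    · -- both in U
      have hDe : D = B - A := hηUU B A hb ha
      have key : (2:ℝ)⁻¹ • (A ^ 2 + B ^ 2)
          - (2:ℝ)⁻¹ • (((2:ℝ)⁻¹ • (A + (A + D))) ^ 2 + (2:ℝ)⁻¹ • (A ^ 2 + (A + D) ^ 2))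
          = (8:ℝ)⁻¹ • ((A - B) * (A - B)) := by
        rw [hDe]
        simp only [pow_two, smul_add, mul_add, add_mul, sub_mul, mul_sub,
          smul_mul_assoc, mul_smul_comm, smul_smul]
        module
      rw [key]
      exact hh_aux_smul_sq_nonneg _ (by norm_num) _ (hAsa.sub hBsa)
end
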